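/- arXiv:1706.03157 — 5 statements merged into one kernel-verified Lean document; each statement's English description precedes it below -/
import Mathlib

section
/- The number of extroverted triangulations of a convex n-gon (for n ≥ 5) is n·2^(n-5). -/
/-- The pair `(a,b)` (with `a < b` in `Fin n`) is a side of the convex `n`-gon whose
vertices are `0, …, n-1` in cyclic order. -/
def IsSide (n : ℕ) (a b : Fin n) : Prop :=
  b.val = a.val + 1 ∨ (a.val = 0 ∧ b.val = n - 1)

/-- A diagonal of the convex `n`-gon, normalized as a pair `(a,b)` with `a < b`. -/
def IsDiagonal (n : ℕ) (p : Fin n × Fin n) : Prop :=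
  p.1 < p.2 ∧ ¬ IsSide n p.1 p.2

/-- Two normalized chords of the convex `n`-gon cross in their interiors. -/
def Crosses (n : ℕ) (p q : Fin n × Fin n) : Prop :=
  (p.1 < q.1 ∧ q.1 < p.2 ∧ p.2 < q.2) ∨ (q.1 < p.1 ∧ p.1 < q.2 ∧ q.2 < p.2)

/-- A triangulation of the convex `n`-gon: a maximal (`n-3`-element) set of pairwise
non-crossing diagonals. -/
def IsTriangulation (n : ℕ) (D : Finset (Fin n × Fin n)) : Prop :=
  (∀ p ∈ D, IsDiagonal n p) ∧ (∀ p ∈ D, ∀ q ∈ D, ¬ Crosses n p q) ∧ D.card = n - 3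

/-- `a` and `b` (with `a < b`) are joined by an edge: a polygon side or a diagonal of `D`. -/
def IsEdge (n : ℕ) (D : Finset (Fin n × Fin n)) (a b : Fin n) : Prop :=
  IsSide n a b ∨ (a, b) ∈ D

/-- A triangle of the triangulation `D` (all three pairs of vertices are edges;
for a triangulated convex polygon these are exactly the triangular faces). -/
def IsTriangleOf (n : ℕ) (D : Finset (Fin n × Fin n)) (a b c : Fin n) : Prop :=
  a < b ∧ b < c ∧ IsEdge n D a b ∧ IsEdge n D b c ∧ IsEdge n D a c

/-- A triangulation is extroverted if every triangle shares an edge with the boundary. -/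
def IsExtroverted (n : ℕ) (D : Finset (Fin n × Fin n)) : Prop :=
  ∀ a b c : Fin n, IsTriangleOf n D a b c →
    IsSide n a b ∨ IsSide n b c ∨ IsSide n a c

/-!
Cut the `n`-gon along the triangle `0, j, n - 1` that sits on its side `(0, n - 1)`. This leaves
the polygons `0, …, j` and `j, …, n - 1`, and the triangulation is extroverted iff each half is
an extroverted triangulation in which, moreover, the triangle on its base has a second side on
the boundary (the base being a diagonal of the whole polygon, unless the half is degenerate).
In the polygon `L, …, R` that extra condition forces the apex over the base to be `L + 1` or
`R - 1`, which splits off a single vertex; so there are `2 ^ (R - L - 2)` such triangulations.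
Summing the products over `0 < j < n - 1` gives `2 · 2 ^ (n - 4) + (n - 4) · 2 ^ (n - 5)`.
-/

namespace IntervalPolygon

open Finset

/-- The polygon with vertices `L, …, R` is cut off from a larger one along its base `(L, R)`;
its chords are its diagonals other than the base. -/
def IsChord (L R : ℕ) (p : ℕ × ℕ) : Prop :=
  L ≤ p.1 ∧ p.1 + 2 ≤ p.2 ∧ p.2 ≤ R ∧ ¬(p.1 = L ∧ p.2 = R)

def Cross (p q : ℕ × ℕ) : Prop :=
  (p.1 < q.1 ∧ q.1 < p.2 ∧ p.2 < q.2) ∨ (q.1 < p.1 ∧ p.1 < q.2 ∧ q.2 < p.2)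

def NonCrossing (F : Finset (ℕ × ℕ)) : Prop :=
  ∀ p ∈ F, ∀ q ∈ F, ¬ Cross p q

def NoInnerTriangle (F : Finset (ℕ × ℕ)) : Prop :=
  ∀ p ∈ F, ∀ q ∈ F, p.2 = q.1 → (p.1, q.2) ∉ F

def Triangulates (L R : ℕ) (F : Finset (ℕ × ℕ)) : Prop :=
  (∀ p ∈ F, IsChord L R p) ∧ NonCrossing F ∧ F.card = R - L - 2

noncomputable section

open Classical in
def chords (L R : ℕ) : Finset (ℕ × ℕ) :=
  (range (R + 1) ×ˢ range (R + 1)).filter (IsChord L R)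

/- Extroverted triangulations of the polygon `L, …, R` when its base is a side (`extroSide`), or
a diagonal of the ambient polygon (`extroDiag`): then the triangle on the base counts as inner
when its two other sides are chords. -/
open Classical in
def extroSide (L R : ℕ) : Finset (Finset (ℕ × ℕ)) :=
  (chords L R).powerset.filter fun F => Triangulates L R F ∧ NoInnerTriangle F

open Classical in
def extroDiag (L R : ℕ) : Finset (Finset (ℕ × ℕ)) :=
  (chords L R).powerset.filter fun F => Triangulates L R F ∧ NoInnerTriangle (insert (L, R) F)

open Classical in
def restrict (F : Finset (ℕ × ℕ)) (a b : ℕ) : Finset (ℕ × ℕ) :=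
  F.filter (IsChord a b)

open Classical in
def apexEdges (L j R : ℕ) : Finset (ℕ × ℕ) :=
  ({(L, j), (j, R)} : Finset (ℕ × ℕ)).filter (IsChord L R)

def IsApex (L R : ℕ) (F : Finset (ℕ × ℕ)) (j : ℕ) : Prop :=
  L < j ∧ j < R ∧ apexEdges L j R ⊆ F

def glue (L j R : ℕ) (F₁ F₂ : Finset (ℕ × ℕ)) : Finset (ℕ × ℕ) :=
  F₁ ∪ F₂ ∪ apexEdges L j R

open Classical in
def withApex (L R j : ℕ) : Finset (Finset (ℕ × ℕ)) :=
  (extroSide L R).filter fun F => IsApex L R F j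

end

variable {L R j : ℕ} {F F₁ F₂ : Finset (ℕ × ℕ)}

theorem mem_chords {p : ℕ × ℕ} : p ∈ chords L R ↔ IsChord L R p := by
  simp only [chords, mem_filter, mem_product, mem_range, and_iff_right_iff_imp, IsChord]
  omega

theorem mem_extroSide : F ∈ extroSide L R ↔ Triangulates L R F ∧ NoInnerTriangle F := by
  simp only [extroSide, mem_filter, mem_powerset, and_iff_right_iff_imp]
  exact fun h _ hp => mem_chords.2 (h.1.1 _ hp)

theorem mem_extroDiag :
    F ∈ extroDiag L R ↔ Triangulates L R F ∧ NoInnerTriangle (insert (L, R) F) := by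
  simp only [extroDiag, mem_filter, mem_powerset, and_iff_right_iff_imp]
  exact fun h _ hp => mem_chords.2 (h.1.1 _ hp)

theorem mem_withApex : F ∈ withApex L R j ↔ F ∈ extroSide L R ∧ IsApex L R F j := by
  simp only [withApex, mem_filter]

theorem mem_restrict {p : ℕ × ℕ} {a b : ℕ} : p ∈ restrict F a b ↔ p ∈ F ∧ IsChord a b p := by
  simp only [restrict, mem_filter]

theorem restrict_subset {a b : ℕ} : restrict F a b ⊆ F := fun _ hp => (mem_restrict.1 hp).1

theorem mem_apexEdges {p : ℕ × ℕ} :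
    p ∈ apexEdges L j R ↔ (p = (L, j) ∨ p = (j, R)) ∧ IsChord L R p := by
  simp only [apexEdges, mem_filter, mem_insert, mem_singleton]

theorem apexEdges_subset_iff :
    apexEdges L j R ⊆ F ↔
      (IsChord L R (L, j) → (L, j) ∈ F) ∧ (IsChord L R (j, R) → (j, R) ∈ F) := by
  simp only [subset_iff, mem_apexEdges]
  constructor
  · exact fun h => ⟨fun hc => h ⟨Or.inl rfl, hc⟩, fun hc => h ⟨Or.inr rfl, hc⟩⟩
  · rintro ⟨h₁, h₂⟩ p ⟨rfl | rfl, hc⟩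
    exacts [h₁ hc, h₂ hc]

theorem NonCrossing.mono {G : Finset (ℕ × ℕ)} (hG : NonCrossing G) (h : F ⊆ G) : NonCrossing F :=
  fun p hp q hq => hG p (h hp) q (h hq)

theorem NoInnerTriangle.mono {G : Finset (ℕ × ℕ)} (hG : NoInnerTriangle G) (h : F ⊆ G) :
    NoInnerTriangle F :=
  fun p hp q hq hpq hr => hG p (h hp) q (h hq) hpq (h hr)

theorem NonCrossing.union {A B : Finset (ℕ × ℕ)} (hA : NonCrossing A) (hB : NonCrossing B)
    (hAj : ∀ p ∈ A, p.2 ≤ j) (hBj : ∀ p ∈ B, j ≤ p.1) : NonCrossing (A ∪ B) := by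
  intro p hp q hq hcross
  unfold Cross at hcross
  rcases mem_union.1 hp with hp | hp <;> rcases mem_union.1 hq with hq | hq
  · exact hA p hp q hq hcross
  · have := hAj p hp; have := hBj q hq; omega
  · have := hBj p hp; have := hAj q hq; omega
  · exact hB p hp q hq hcross

theorem NoInnerTriangle.union {A B : Finset (ℕ × ℕ)} (hA : NoInnerTriangle A)
    (hB : NoInnerTriangle B) (hAj : ∀ p ∈ A, p.1 < p.2 ∧ p.2 ≤ j)
    (hBj : ∀ p ∈ B, j ≤ p.1 ∧ p.1 < p.2) : NoInnerTriangle (A ∪ B) := by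
  have side : ∀ x ∈ A ∪ B, (x ∈ A ∧ x.1 < x.2 ∧ x.2 ≤ j) ∨ (x ∈ B ∧ j ≤ x.1 ∧ x.1 < x.2) := by
    intro x hx
    rcases mem_union.1 hx with hx | hx
    exacts [Or.inl ⟨hx, hAj x hx⟩, Or.inr ⟨hx, hBj x hx⟩]
  intro p hp q hq hpq hr
  rcases side p hp with ⟨hp, hp'⟩ | ⟨hp, hp'⟩ <;> rcases side q hq with ⟨hq, hq'⟩ | ⟨hq, hq'⟩ <;>
    rcases side _ hr with ⟨hr, hr'⟩ | ⟨hr, hr'⟩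
  all_goals first
    | exact hA p hp q hq hpq hr
    | exact hB p hp q hq hpq hr
    | (dsimp only at hr'; omega)

theorem nonCrossing_insert (hF : ∀ p ∈ F, IsChord L R p) (hnc : NonCrossing F) :
    NonCrossing (insert (L, R) F) := by
  have key : ∀ p ∈ F, ¬ Cross p (L, R) ∧ ¬ Cross (L, R) p := by
    intro p hp
    have := hF p hp
    simp only [Cross, IsChord] at this ⊢
    omega
  intro p hp q hq
  rcases mem_insert.1 hp with rfl | hp <;> rcases mem_insert.1 hq with rfl | hq
  · simp [Cross]
  · exact (key q hq).2
  · exact (key p hp).1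
  · exact hnc p hp q hq

theorem noInnerTriangle_insert_iff (hLR : L < R) (hF : ∀ p ∈ F, IsChord L R p) :
    NoInnerTriangle (insert (L, R) F) ↔ NoInnerTriangle F ∧ ∀ m, (L, m) ∈ F → (m, R) ∉ F := by
  constructor
  · intro h
    refine ⟨h.mono (subset_insert _ _), fun m hLm hmR => ?_⟩
    exact h _ (mem_insert_of_mem hLm) _ (mem_insert_of_mem hmR) rfl (mem_insert_self _ _)
  · rintro ⟨h, hsplit⟩ p hp q hq hpq hr
    rcases mem_insert.1 hp with rfl | hp
    · rcases mem_insert.1 hq with rfl | hq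
      · simp at hpq; omega
      · have := hF q hq; unfold IsChord at this; omega
    rcases mem_insert.1 hq with rfl | hq
    · have := hF p hp; unfold IsChord at this; omega
    rcases mem_insert.1 hr with hr | hr
    · obtain ⟨h1, h2⟩ := Prod.mk.inj hr
      exact hsplit p.2 (by rw [← h1]; exact hp) (by rw [← h2, hpq]; exact hq)
    · exact h p hp q hq hpq hr

theorem card_apexEdges_add (hLj : L < j) (hjR : j < R) :
    (apexEdges L j R).card + (j - L - 2) + (R - j - 2) = R - L - 2 := by
  have hne : (L, j) ≠ (j, R) := fun h => by simp at h; omega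
  by_cases h₁ : L + 2 ≤ j <;> by_cases h₂ : j + 2 ≤ R <;>
    simp [apexEdges, filter_insert, filter_singleton, IsChord, card_pair hne, h₁, h₂, hLj.le,
      hjR.le, hLj.ne', hjR.ne] <;> omega

theorem card_glue (h₁ : ∀ p ∈ F₁, IsChord L j p) (h₂ : ∀ p ∈ F₂, IsChord j R p) :
    (glue L j R F₁ F₂).card = F₁.card + F₂.card + (apexEdges L j R).card := by
  have d₁₂ : Disjoint F₁ F₂ := disjoint_left.2 fun p hp₁ hp₂ => by
    have := h₁ p hp₁; have := h₂ p hp₂; unfold IsChord at *; omega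
  have d₃ : Disjoint (F₁ ∪ F₂) (apexEdges L j R) := disjoint_left.2 fun p hp hp₃ => by
    obtain ⟨rfl | rfl, hc⟩ := mem_apexEdges.1 hp₃ <;> rcases mem_union.1 hp with hp | hp
    all_goals first
      | (have := h₁ _ hp; unfold IsChord at *; dsimp only at *; omega)
      | (have := h₂ _ hp; unfold IsChord at *; dsimp only at *; omega)
  rw [glue, card_union_of_disjoint d₃, card_union_of_disjoint d₁₂]

theorem subset_glue_restrict (hF : ∀ p ∈ F, IsChord L R p)
    (hsep : ∀ p ∈ F, p.2 ≤ j ∨ j ≤ p.1) :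
    F ⊆ glue L j R (restrict F L j) (restrict F j R) := by
  intro p hp
  have hc := hF p hp
  have hs := hsep p hp
  simp only [glue, mem_union, mem_restrict, mem_apexEdges, hp, hc, true_and, and_true]
  obtain ⟨a, b⟩ := p
  simp only [IsChord, Prod.mk.injEq] at hc hs ⊢
  omega

theorem exists_separator (hLR : L + 2 ≤ R) (hF : ∀ p ∈ F, IsChord L R p)
    (hnc : NonCrossing F) : ∃ j, L < j ∧ j < R ∧ ∀ p ∈ F, p.2 ≤ j ∨ j ≤ p.1 := by
  classical
  have hex : ∃ j, L < j ∧ (j + 1 = R ∨ (j, R) ∈ F) := ⟨R - 1, by omega, Or.inl (by omega)⟩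
  -- The leftmost neighbour of `R` separates: a chord straddling it would cross the edge to `R`.
  obtain ⟨hLj, hjR⟩ := Nat.find_spec hex
  refine ⟨Nat.find hex, hLj, ?_, fun p hp => ?_⟩
  · have := Nat.find_min' hex ⟨(by omega : L < R - 1), Or.inl (by omega)⟩
    omega
  have hp' := hF p hp
  unfold IsChord at hp'
  by_cases hpR : p.2 = R
  · exact Or.inr (Nat.find_min' hex ⟨by omega, Or.inr (by rw [← hpR]; exact hp)⟩)
  rcases hjR with hjR | hjR
  · omega
  · have := hnc p hp _ hjR
    unfold Cross at this
    omega

theorem card_le_of_nonCrossing (hF : ∀ p ∈ F, IsChord L R p) (hnc : NonCrossing F) :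
    F.card ≤ R - L - 2 := by
  induction hk : R - L using Nat.strong_induction_on generalizing L R F with
  | _ k ih =>
  subst hk
  by_cases hLR : R ≤ L + 2
  · have : F = ∅ := eq_empty_of_forall_notMem fun p hp => by
      have := hF p hp; unfold IsChord at this; omega
    simp [this]
  obtain ⟨j, hLj, hjR, hsep⟩ := exists_separator (by omega) hF hnc
  have restrict_le {a b : ℕ} (hab : b - a < R - L) : (restrict F a b).card ≤ b - a - 2 :=
    ih _ hab (fun p hp => (mem_restrict.1 hp).2) (hnc.mono restrict_subset) rfl
  have h₁ := restrict_le (a := L) (b := j) (by omega)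
  have h₂ := restrict_le (a := j) (b := R) (by omega)
  calc F.card ≤ (glue L j R (restrict F L j) (restrict F j R)).card :=
        card_le_card (subset_glue_restrict hF hsep)
    _ = _ := card_glue (fun p hp => (mem_restrict.1 hp).2) (fun p hp => (mem_restrict.1 hp).2)
    _ ≤ R - L - 2 := by have := card_apexEdges_add hLj hjR; omega

theorem Triangulates.eq_glue_restrict (hT : Triangulates L R F) (hLj : L < j) (hjR : j < R)
    (hsep : ∀ p ∈ F, p.2 ≤ j ∨ j ≤ p.1) :
    F = glue L j R (restrict F L j) (restrict F j R) ∧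
      Triangulates L j (restrict F L j) ∧ Triangulates j R (restrict F j R) := by
  obtain ⟨hF, hnc, hcard⟩ := hT
  have hc₁ : ∀ p ∈ restrict F L j, IsChord L j p := fun p hp => (mem_restrict.1 hp).2
  have hc₂ : ∀ p ∈ restrict F j R, IsChord j R p := fun p hp => (mem_restrict.1 hp).2
  have h₁ := card_le_of_nonCrossing hc₁ (hnc.mono restrict_subset)
  have h₂ := card_le_of_nonCrossing hc₂ (hnc.mono restrict_subset)
  have hglue := card_glue hc₁ hc₂
  -- `F` has the maximal number of chords, so both halves and `apexEdges` must be full.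
  have hsub := subset_glue_restrict hF hsep
  have := card_le_card hsub
  have := card_apexEdges_add hLj hjR
  refine ⟨eq_of_subset_of_card_le hsub (by omega), ⟨hc₁, hnc.mono restrict_subset, by omega⟩,
    ⟨hc₂, hnc.mono restrict_subset, by omega⟩⟩

theorem Triangulates.exists_isApex (hT : Triangulates L R F) (hLR : L + 2 ≤ R) :
    ∃ j, IsApex L R F j := by
  obtain ⟨j, hLj, hjR, hsep⟩ := exists_separator hLR hT.1 hT.2.1
  refine ⟨j, hLj, hjR, ?_⟩
  rw [(hT.eq_glue_restrict hLj hjR hsep).1]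
  exact subset_union_right

theorem IsApex.separates (hF : ∀ p ∈ F, IsChord L R p) (hnc : NonCrossing F)
    (hj : IsApex L R F j) : ∀ p ∈ F, p.2 ≤ j ∨ j ≤ p.1 := by
  obtain ⟨hLj, hjR, hsub⟩ := hj
  obtain ⟨hLj_mem, hjR_mem⟩ := apexEdges_subset_iff.1 hsub
  intro p hp
  have hp' := hF p hp
  unfold IsChord at hp'
  by_contra! h
  by_cases hpL : p.1 = L
  · have := hnc p hp _ (hjR_mem (by unfold IsChord; omega))
    unfold Cross at this
    omega
  · have := hnc _ (hLj_mem (by unfold IsChord; omega)) p hp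
    unfold Cross at this
    omega

theorem IsApex.unique {j' : ℕ} (hnc : NonCrossing F) (hj : IsApex L R F j)
    (hj' : IsApex L R F j') : j = j' := by
  wlog hlt : j < j' generalizing j j'
  · rcases (not_lt.1 hlt).lt_or_eq with h | h
    exacts [(this hj' hj h).symm, h.symm]
  obtain ⟨hLj, -, hsub⟩ := hj
  obtain ⟨-, hjR', hsub'⟩ := hj'
  have hjR := (apexEdges_subset_iff.1 hsub).2 (by unfold IsChord; omega)
  have hLj' := (apexEdges_subset_iff.1 hsub').1 (by unfold IsChord; omega)
  exact absurd (Or.inl (by dsimp only; omega)) (hnc _ hLj' _ hjR)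

theorem glue_mem_extroSide (hLj : L < j) (hjR : j < R) (h₁ : F₁ ∈ extroDiag L j)
    (h₂ : F₂ ∈ extroDiag j R) : glue L j R F₁ F₂ ∈ extroSide L R := by
  obtain ⟨⟨hc₁, hnc₁, hcard₁⟩, hni₁⟩ := mem_extroDiag.1 h₁
  obtain ⟨⟨hc₂, hnc₂, hcard₂⟩, hni₂⟩ := mem_extroDiag.1 h₂
  have hA : ∀ p ∈ insert (L, j) F₁, p.1 < p.2 ∧ p.2 ≤ j := by
    intro p hp
    rcases mem_insert.1 hp with rfl | hp
    · exact ⟨hLj, le_rfl⟩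
    · have := hc₁ p hp; unfold IsChord at this; omega
  have hB : ∀ p ∈ insert (j, R) F₂, j ≤ p.1 ∧ p.1 < p.2 := by
    intro p hp
    rcases mem_insert.1 hp with rfl | hp
    · exact ⟨le_rfl, hjR⟩
    · have := hc₂ p hp; unfold IsChord at this; omega
  have hsub : glue L j R F₁ F₂ ⊆ insert (L, j) F₁ ∪ insert (j, R) F₂ := by
    intro p hp
    simp only [glue, mem_union, mem_apexEdges] at hp
    rcases hp with (hp | hp) | ⟨rfl | rfl, -⟩ <;> simp_all
  have hnc := (nonCrossing_insert hc₁ hnc₁).union (nonCrossing_insert hc₂ hnc₂)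
    (fun p hp => (hA p hp).2) (fun p hp => (hB p hp).1)
  have hchord : ∀ p ∈ glue L j R F₁ F₂, IsChord L R p := by
    intro p hp
    simp only [glue, mem_union, mem_apexEdges] at hp
    rcases hp with (hp | hp) | ⟨-, hp⟩
    · have := hc₁ p hp; unfold IsChord at this ⊢; omega
    · have := hc₂ p hp; unfold IsChord at this ⊢; omega
    · exact hp
  refine mem_extroSide.2 ⟨⟨hchord, hnc.mono hsub, ?_⟩, (hni₁.union hni₂ hA hB).mono hsub⟩
  rw [card_glue hc₁ hc₂]
  have := card_apexEdges_add hLj hjR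
  omega

theorem restrict_glue_left (h₁ : ∀ p ∈ F₁, IsChord L j p) (h₂ : ∀ p ∈ F₂, IsChord j R p) :
    restrict (glue L j R F₁ F₂) L j = F₁ := by
  ext p
  simp only [mem_restrict, glue, mem_union, mem_apexEdges]
  constructor
  · rintro ⟨(hp | hp) | ⟨rfl | rfl, -⟩, hc⟩
    · exact hp
    · have := h₂ p hp; unfold IsChord at *; omega
    all_goals unfold IsChord at hc; dsimp only at hc; omega
  · exact fun hp => ⟨Or.inl (Or.inl hp), h₁ p hp⟩

theorem restrict_glue_right (h₁ : ∀ p ∈ F₁, IsChord L j p) (h₂ : ∀ p ∈ F₂, IsChord j R p) :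
    restrict (glue L j R F₁ F₂) j R = F₂ := by
  ext p
  simp only [mem_restrict, glue, mem_union, mem_apexEdges]
  constructor
  · rintro ⟨(hp | hp) | ⟨rfl | rfl, -⟩, hc⟩
    · have := h₁ p hp; unfold IsChord at *; omega
    · exact hp
    all_goals unfold IsChord at hc; dsimp only at hc; omega
  · exact fun hp => ⟨Or.inl (Or.inr hp), h₂ p hp⟩

theorem eq_glue_restrict_of_isApex (hF : F ∈ extroSide L R) (hj : IsApex L R F j) :
    F = glue L j R (restrict F L j) (restrict F j R) ∧
      restrict F L j ∈ extroDiag L j ∧ restrict F j R ∈ extroDiag j R := by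
  obtain ⟨hT, hni⟩ := mem_extroSide.1 hF
  obtain ⟨heq, hT₁, hT₂⟩ := hT.eq_glue_restrict hj.1 hj.2.1 (hj.separates hT.1 hT.2.1)
  obtain ⟨hLj, hjR, hsub⟩ := hj
  obtain ⟨hLj_mem, hjR_mem⟩ := apexEdges_subset_iff.1 hsub
  refine ⟨heq, mem_extroDiag.2 ⟨hT₁, ?_⟩, mem_extroDiag.2 ⟨hT₂, ?_⟩⟩
  · refine (noInnerTriangle_insert_iff hLj hT₁.1).2 ⟨hni.mono restrict_subset, fun m h₁ h₂ => ?_⟩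
    obtain ⟨h₁, hc₁⟩ := mem_restrict.1 h₁
    obtain ⟨h₂, hc₂⟩ := mem_restrict.1 h₂
    unfold IsChord at hc₁ hc₂
    exact hni _ h₁ _ h₂ rfl (hLj_mem (by unfold IsChord; dsimp only at *; omega))
  · refine (noInnerTriangle_insert_iff hjR hT₂.1).2 ⟨hni.mono restrict_subset, fun m h₁ h₂ => ?_⟩
    obtain ⟨h₁, hc₁⟩ := mem_restrict.1 h₁
    obtain ⟨h₂, hc₂⟩ := mem_restrict.1 h₂
    unfold IsChord at hc₁ hc₂
    exact hni _ h₁ _ h₂ rfl (hjR_mem (by unfold IsChord; dsimp only at *; omega))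

theorem card_withApex (hLj : L < j) (hjR : j < R) :
    (withApex L R j).card = (extroDiag L j).card * (extroDiag j R).card := by
  rw [← card_product]
  refine card_nbij' (fun F => (restrict F L j, restrict F j R)) (fun P => glue L j R P.1 P.2)
    ?_ ?_ ?_ ?_
  · intro F hF
    obtain ⟨hF, hj⟩ := mem_withApex.1 hF
    have := eq_glue_restrict_of_isApex hF hj
    exact mem_product.2 this.2
  · rintro ⟨F₁, F₂⟩ hP
    obtain ⟨h₁, h₂⟩ := mem_product.1 hP
    exact mem_withApex.2 ⟨glue_mem_extroSide hLj hjR h₁ h₂, hLj, hjR, subset_union_right⟩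
  · intro F hF
    obtain ⟨hF, hj⟩ := mem_withApex.1 hF
    exact (eq_glue_restrict_of_isApex hF hj).1.symm
  · rintro ⟨F₁, F₂⟩ hP
    obtain ⟨h₁, h₂⟩ := mem_product.1 hP
    have hc₁ := (mem_extroDiag.1 h₁).1.1
    have hc₂ := (mem_extroDiag.1 h₂).1.1
    simp only [restrict_glue_left hc₁ hc₂, restrict_glue_right hc₁ hc₂]

theorem disjoint_withApex {j' : ℕ} (hne : j ≠ j') :
    Disjoint (withApex L R j) (withApex L R j') := by
  refine disjoint_left.2 fun F hF hF' => hne ?_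
  obtain ⟨hF, hj⟩ := mem_withApex.1 hF
  exact hj.unique (mem_extroSide.1 hF).1.2.1 (mem_withApex.1 hF').2

theorem extroSide_eq_biUnion (hLR : L + 2 ≤ R) :
    extroSide L R = (Ioo L R).biUnion (withApex L R) := by
  ext F
  simp only [mem_biUnion, mem_Ioo, mem_withApex]
  constructor
  · intro hF
    obtain ⟨j, hj⟩ := (mem_extroSide.1 hF).1.exists_isApex hLR
    exact ⟨j, ⟨hj.1, hj.2.1⟩, hF, hj⟩
  · rintro ⟨j, -, hF, -⟩
    exact hF

theorem card_extroSide_eq_sum (hLR : L + 2 ≤ R) :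
    (extroSide L R).card = ∑ j ∈ Ioo L R, (extroDiag L j).card * (extroDiag j R).card := by
  classical
  rw [extroSide_eq_biUnion hLR, card_biUnion]
  · refine sum_congr rfl fun j hj => ?_
    obtain ⟨hLj, hjR⟩ := mem_Ioo.1 hj
    exact card_withApex hLj hjR
  · exact fun j _ j' _ hne => disjoint_withApex hne

theorem extroDiag_eq_union (hLR : L + 2 ≤ R) :
    extroDiag L R = withApex L R (L + 1) ∪ withApex L R (R - 1) := by
  ext F
  simp only [mem_union, mem_withApex, mem_extroDiag, mem_extroSide, ← and_or_left, and_assoc]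
  refine and_congr_right fun hT => ?_
  rw [noInnerTriangle_insert_iff (by omega) hT.1]
  refine and_congr_right fun _ => ?_
  constructor
  · intro hsplit
    obtain ⟨j, hj⟩ := hT.exists_isApex hLR
    obtain ⟨hLj, hjR, hsub⟩ := hj
    obtain ⟨hLj_mem, hjR_mem⟩ := apexEdges_subset_iff.1 hsub
    by_contra! h
    have h₁ : j ≠ L + 1 := fun h' => h.1 (h' ▸ ⟨hLj, hjR, hsub⟩)
    have h₂ : j ≠ R - 1 := fun h' => h.2 (h' ▸ ⟨hLj, hjR, hsub⟩)
    exact hsplit j (hLj_mem (by unfold IsChord; omega)) (hjR_mem (by unfold IsChord; omega))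
  · intro hj m hLm hmR
    have hLm' := hT.1 _ hLm
    have hmR' := hT.1 _ hmR
    unfold IsChord at hLm' hmR'
    have hm : IsApex L R F m :=
      ⟨by omega, by omega, apexEdges_subset_iff.2 ⟨fun _ => hLm, fun _ => hmR⟩⟩
    rcases hj with hj | hj <;> have := hm.unique hT.2.1 hj <;> omega

theorem extroDiag_eq_singleton (hLR : L < R) (hRL : R ≤ L + 2) : extroDiag L R = {∅} := by
  ext F
  rw [mem_singleton, mem_extroDiag]
  constructor
  · rintro ⟨⟨hc, -⟩, -⟩
    exact eq_empty_of_forall_notMem fun p hp => by have := hc p hp; unfold IsChord at this; omega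
  · rintro rfl
    refine ⟨⟨by simp, by simp [NonCrossing], by simp; omega⟩, ?_⟩
    simp [NoInnerTriangle]
    omega

theorem card_extroDiag_eq_add (hLR : L + 3 ≤ R) :
    (extroDiag L R).card = (extroDiag (L + 1) R).card + (extroDiag L (R - 1)).card := by
  rw [extroDiag_eq_union (by omega), card_union_of_disjoint (disjoint_withApex (by omega)),
    card_withApex (by omega) (by omega), card_withApex (by omega) (by omega),
    extroDiag_eq_singleton (L := L) (by omega) (by omega),
    extroDiag_eq_singleton (L := R - 1) (R := R) (by omega) (by omega)]
  simp

/-- For `R = L + 1` the exponent truncates to `0`: the degenerate polygon has one (empty)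
triangulation. -/
theorem card_extroDiag (hLR : L < R) : (extroDiag L R).card = 2 ^ (R - L - 2) := by
  induction hk : R - L using Nat.strong_induction_on generalizing L R with
  | _ k ih =>
  subst hk
  by_cases hRL : R ≤ L + 2
  · rw [extroDiag_eq_singleton hLR hRL, card_singleton, show R - L - 2 = 0 by omega, pow_zero]
  rw [card_extroDiag_eq_add (by omega), ih _ (by omega) (by omega) rfl,
    ih _ (by omega) (by omega) rfl, show R - (L + 1) - 2 = R - L - 3 by omega,
    show R - 1 - L - 2 = R - L - 3 by omega, ← two_mul, ← pow_succ']
  congr 1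
  omega

theorem sum_Ioo_two_pow (hLR : L + 4 ≤ R) :
    ∑ j ∈ Ioo L R, 2 ^ (j - L - 2) * 2 ^ (R - j - 2) = (R - L + 1) * 2 ^ (R - L - 4) := by
  have hIoo : Ioo L R = insert (L + 1) (insert (R - 1) (Ioo (L + 1) (R - 1))) := by
    ext x
    simp only [mem_Ioo, mem_insert]
    omega
  have hmid : ∀ j ∈ Ioo (L + 1) (R - 1), 2 ^ (j - L - 2) * 2 ^ (R - j - 2) = 2 ^ (R - L - 4) := by
    intro j hj
    rw [mem_Ioo] at hj
    rw [← pow_add]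
    congr 1
    omega
  rw [hIoo, sum_insert (by simp; omega), sum_insert (by simp), sum_congr rfl hmid, sum_const,
    Nat.card_Ioo, smul_eq_mul, show L + 1 - L - 2 = 0 by omega,
    show R - 1 - L - 2 = R - L - 4 + 1 by omega,
    show R - (L + 1) - 2 = R - L - 4 + 1 by omega, show R - (R - 1) - 2 = 0 by omega,
    show R - 1 - (L + 1) - 1 = R - L - 4 + 1 by omega, show R - L + 1 = R - L - 4 + 5 by omega]
  ring

theorem card_extroSide (hLR : L + 4 ≤ R) :
    (extroSide L R).card = (R - L + 1) * 2 ^ (R - L - 4) := by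
  rw [card_extroSide_eq_sum (by omega), ← sum_Ioo_two_pow hLR]
  refine sum_congr rfl fun j hj => ?_
  rw [mem_Ioo] at hj
  rw [card_extroDiag hj.1, card_extroDiag hj.2]

section Transfer

def embed (n : ℕ) : Fin n × Fin n ↪ ℕ × ℕ :=
  Fin.valEmbedding.prodMap Fin.valEmbedding

variable {n : ℕ} {D : Finset (Fin n × Fin n)}

@[simp]
theorem embed_apply (p : Fin n × Fin n) : embed n p = ((p.1 : ℕ), (p.2 : ℕ)) := rfl

theorem isDiagonal_iff {p : Fin n × Fin n} : IsDiagonal n p ↔ IsChord 0 (n - 1) (embed n p) := by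
  have := p.1.isLt
  have := p.2.isLt
  simp only [IsDiagonal, IsSide, IsChord, embed_apply, Fin.lt_def]
  omega

theorem isExtroverted_iff (hD : ∀ p ∈ D, IsDiagonal n p) :
    IsExtroverted n D ↔ NoInnerTriangle (D.map (embed n)) := by
  have mem_map_embed (a b : Fin n) : ((a : ℕ), (b : ℕ)) ∈ D.map (embed n) ↔ (a, b) ∈ D :=
    mem_map' (embed n) (a := (a, b))
  simp only [NoInnerTriangle, forall_mem_map]
  constructor
  · rintro hext ⟨a, b⟩ hab ⟨b', c⟩ hbc (hb : (b : ℕ) = b') hac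
    obtain rfl := Fin.ext hb
    have hac := (mem_map_embed a c).1 hac
    rcases hext a b c ⟨(hD _ hab).1, (hD _ hbc).1, Or.inr hab, Or.inr hbc, Or.inr hac⟩ with
      h | h | h
    exacts [(hD _ hab).2 h, (hD _ hbc).2 h, (hD _ hac).2 h]
  · rintro hni a b c ⟨-, -, hab, hbc, hac⟩
    by_contra! h
    exact hni (a, b) (hab.resolve_left h.1) (b, c) (hbc.resolve_left h.2.1) rfl
      ((mem_map_embed a c).2 (hac.resolve_left h.2.2))

theorem map_embed_mem_extroSide_iff :
    D.map (embed n) ∈ extroSide 0 (n - 1) ↔ IsTriangulation n D ∧ IsExtroverted n D := by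
  have hcard : (D.map (embed n)).card = n - 1 - 0 - 2 ↔ D.card = n - 3 := by
    rw [card_map]; omega
  simp only [mem_extroSide, Triangulates, NonCrossing, forall_mem_map, hcard, IsTriangulation,
    ← isDiagonal_iff]
  constructor
  · rintro ⟨⟨hD, hnc, hcard⟩, hni⟩
    exact ⟨⟨hD, hnc, hcard⟩, (isExtroverted_iff hD).2 hni⟩
  · rintro ⟨⟨hD, hnc, hcard⟩, hext⟩
    exact ⟨⟨hD, hnc, hcard⟩, (isExtroverted_iff hD).1 hext⟩

theorem exists_map_embed_eq {F : Finset (ℕ × ℕ)} (hF : ∀ p ∈ F, IsChord 0 (n - 1) p) :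
    ∃ D : Finset (Fin n × Fin n), D.map (embed n) = F := by
  obtain ⟨D, -, hD⟩ := (subset_map_iff (f := embed n) (t := univ)).1 fun p hp => by
    have := hF p hp
    unfold IsChord at this
    exact mem_map.2 ⟨((⟨p.1, by omega⟩, ⟨p.2, by omega⟩) : Fin n × Fin n), mem_univ _, rfl⟩
  exact ⟨D, hD.symm⟩

end Transfer

end IntervalPolygon

/-- The number of extroverted triangulations of a convex `n`-gon (for `n ≥ 5`)
is `n·2^(n-5)`. -/
theorem count_extroverted_triangulations (n : ℕ) (hn : 5 ≤ n) :
    Nat.card {D : Finset (Fin n × Fin n) // IsTriangulation n D ∧ IsExtroverted n D}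
      = n * 2 ^ (n - 5) := by
  let f : {D : Finset (Fin n × Fin n) // IsTriangulation n D ∧ IsExtroverted n D} →
      IntervalPolygon.extroSide 0 (n - 1) :=
    fun D => ⟨D.1.map (IntervalPolygon.embed n),
      IntervalPolygon.map_embed_mem_extroSide_iff.2 D.2⟩
  have hf : Function.Bijective f := by
    refine ⟨fun D₁ D₂ h => Subtype.ext (Finset.map_injective _ (congrArg Subtype.val h)), ?_⟩
    rintro ⟨F, hF⟩
    obtain ⟨D, rfl⟩ :=
      IntervalPolygon.exists_map_embed_eq (IntervalPolygon.mem_extroSide.1 hF).1.1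
    exact ⟨⟨D, IntervalPolygon.map_embed_mem_extroSide_iff.1 hF⟩, rfl⟩
  rw [Nat.card_eq_of_bijective f hf, Nat.card_eq_finsetCard,
    IntervalPolygon.card_extroSide (by omega), show n - 1 - 0 + 1 = n by omega,
    show n - 1 - 0 - 4 = n - 5 by omega]
end

section
/- There is a bijection between fixed-point-free involutions of S_n (n even) and oscillating tableaux of length n. -/
/-- An oscillating tableau of length n: a sequence of partitions beginning and ending at ∅
in which consecutive partitions differ by exactly one box (added or removed). -/
def IsOscillatingTableau (n : ℕ) (μ : Fin (n + 1) → YoungDiagram) : Prop :=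
  μ 0 = ⊥ ∧ μ (Fin.last n) = ⊥ ∧
  ∀ i : Fin n,
    (μ i.castSucc ≤ μ i.succ ∧ (μ i.succ).card = (μ i.castSucc).card + 1) ∨
    (μ i.succ ≤ μ i.castSucc ∧ (μ i.castSucc).card = (μ i.succ).card + 1)

/-!
Both sides have `numMatchings n` elements. A fixed-point-free involution is a choice of the
partner `b ≠ a` of a point `a` together with a fixed-point-free involution of the remaining
`n - 2` points.

For tableaux, count the more general oscillating walks of length `n` in Young's lattice from a
diagram `λ` down to `∅`: there are `C(n, |λ|) · f^λ · numMatchings (n - |λ|)` of them, by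
induction on `n`. The inductive step is the identity `∑_{ν ⋗ μ} f^ν = (|μ| + 1) f^μ`, which holds because
Young's lattice is 1-differential: every `μ` has one more upper cover than lower covers, and two
distinct diagrams have as many common upper covers as common lower covers (at most one, namely
`μ ⊔ ρ`, resp. `μ ⊓ ρ`).
-/

open Finset Equiv

lemma Finset.card_eq_ite_of_subset_singleton {α : Type*} {s : Finset α} {a : α}
    [Decidable (a ∈ s)] (h : s ⊆ {a}) : #s = if a ∈ s then 1 else 0 := by
  rcases subset_singleton_iff.mp h with rfl | rfl <;> simp

lemma Finset.sum_sum_eq_sum_card_inter_smul {α β M : Type*} [DecidableEq α] [AddCommMonoid M]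
    {s : Finset α} {t : α → Finset β} {u : β → Finset α} (S : Finset β)
    (htu : ∀ x y, y ∈ t x ↔ x ∈ u y) (hS : ∀ x ∈ s, t x ⊆ S) (g : β → M) :
    ∑ x ∈ s, ∑ y ∈ t x, g y = ∑ y ∈ S, #(s ∩ u y) • g y := by
  rw [sum_comm' (t' := S) (s' := fun y => s ∩ u y)]
  · simp only [sum_const]
  · intro x y
    rw [mem_inter, ← htu]
    exact ⟨fun h => ⟨h, hS x h.1 h.2⟩, And.left⟩

namespace YoungDiagram

variable {μ ν ρ κ : YoungDiagram}

def AddsBox (μ ν : YoungDiagram) : Prop := μ ≤ ν ∧ ν.card = μ.card + 1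

lemma eq_of_le_of_card_le (h : μ ≤ ν) (h' : ν.card ≤ μ.card) : μ = ν :=
  YoungDiagram.ext (Finset.eq_of_subset_of_card_le (cells_subset_iff.mpr h) h')

lemma card_sup_add_card_inf (μ ν : YoungDiagram) :
    (μ ⊔ ν).card + (μ ⊓ ν).card = μ.card + ν.card := by
  simp only [YoungDiagram.card, cells_sup, cells_inf, card_union_add_card_inter]

lemma card_eq_zero_iff : μ.card = 0 ↔ μ = ⊥ := by
  rw [YoungDiagram.card, Finset.card_eq_zero, ← cells_bot, YoungDiagram.ext_iff]

lemma card_bot : (⊥ : YoungDiagram).card = 0 :=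
  card_eq_zero_iff.mpr rfl

lemma addsBox_iff_exists_insert : μ.AddsBox ν ↔ ∃ c ∉ μ, ν.cells = insert c μ.cells := by
  constructor
  · rintro ⟨hle, hcard⟩
    obtain ⟨c, hcν, hcμ⟩ := exists_mem_notMem_of_card_lt_card (s := μ.cells) (t := ν.cells)
      (by simp only [YoungDiagram.card] at hcard; omega)
    refine ⟨c, (mem_cells c).not.mp hcμ, (eq_of_subset_of_card_le ?_ ?_).symm⟩
    · exact insert_subset hcν (cells_subset_iff.mpr hle)
    · rw [card_insert_of_notMem hcμ]; exact hcard.le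
  · rintro ⟨c, hc, hν⟩
    refine ⟨cells_subset_iff.mp (hν ▸ subset_insert c μ.cells), ?_⟩
    rw [YoungDiagram.card, YoungDiagram.card, hν, card_insert_of_notMem ((mem_cells c).not.mpr hc)]

/-- The rows `i` in which the box `(i, μ.rowLen i)` can be added; `removableRows` are those from
which `(i, μ.rowLen i - 1)` can be removed. -/
def addableRows (μ : YoungDiagram) : Finset ℕ :=
  (range (μ.colLen 0 + 1)).filter fun i => i = 0 ∨ μ.rowLen i < μ.rowLen (i - 1)

def removableRows (μ : YoungDiagram) : Finset ℕ :=
  (range (μ.colLen 0)).filter fun i => μ.rowLen (i + 1) < μ.rowLen i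

lemma lt_colLen_zero_of_rowLen_pos {i : ℕ} (h : 0 < μ.rowLen i) : i < μ.colLen 0 :=
  mem_iff_lt_colLen.mp (mem_iff_lt_rowLen.mpr h)

lemma mem_addableRows {i : ℕ} :
    i ∈ μ.addableRows ↔ i = 0 ∨ μ.rowLen i < μ.rowLen (i - 1) := by
  refine ⟨fun h => (mem_filter.mp h).2, fun h => mem_filter.mpr ⟨mem_range.mpr ?_, h⟩⟩
  rcases h with rfl | h
  · omega
  · have := lt_colLen_zero_of_rowLen_pos (pos_of_gt h); omega

lemma mem_removableRows {i : ℕ} : i ∈ μ.removableRows ↔ μ.rowLen (i + 1) < μ.rowLen i :=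
  ⟨fun h => (mem_filter.mp h).2, fun h =>
    mem_filter.mpr ⟨mem_range.mpr (lt_colLen_zero_of_rowLen_pos (pos_of_gt h)), h⟩⟩

lemma addableRows_eq : μ.addableRows = insert 0 (μ.removableRows.image (· + 1)) := by
  ext i
  cases i <;> simp [mem_addableRows, mem_removableRows]

lemma card_addableRows : #μ.addableRows = #μ.removableRows + 1 := by
  rw [addableRows_eq, card_insert_of_notMem (by simp),
    card_image_of_injective _ (add_left_injective 1)]

lemma isLowerSet_insert_iff {c : ℕ × ℕ} (hc : c ∉ μ) :
    IsLowerSet (↑(insert c μ.cells) : Set (ℕ × ℕ)) ↔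
      c.1 ∈ μ.addableRows ∧ c.2 = μ.rowLen c.1 := by
  obtain ⟨i, j⟩ := c
  have hj : μ.rowLen i ≤ j := not_lt.mp (mem_iff_lt_rowLen.not.mp hc)
  simp only [mem_addableRows, IsLowerSet, coe_insert, Set.mem_insert_iff, mem_coe, mem_cells]
  constructor
  · intro h
    have hrow := h (show (i, μ.rowLen i) ≤ (i, j) from ⟨le_rfl, hj⟩) (Or.inl rfl)
    have hj' : j = μ.rowLen i := by
      rcases hrow with hrow | hrow
      · exact (Prod.ext_iff.mp hrow).2.symm
      · exact absurd (mem_iff_lt_rowLen.mp hrow) (lt_irrefl _)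
    refine ⟨(Nat.eq_zero_or_pos i).imp_right fun hi => ?_, hj'⟩
    rcases h (show (i - 1, j) ≤ (i, j) from ⟨Nat.sub_le i 1, le_rfl⟩) (Or.inl rfl) with h' | h'
    · exact absurd (Prod.ext_iff.mp h').1 (by omega)
    · exact hj' ▸ mem_iff_lt_rowLen.mp h'
  · rintro ⟨hi, rfl⟩ ⟨x, y⟩ ⟨x', y'⟩ ⟨hx, hy⟩ hxy
    simp only at hx hy
    rcases hxy with hxy | hxy
    · obtain ⟨rfl, rfl⟩ := Prod.mk.inj hxy
      rcases eq_or_lt_of_le hx with rfl | hx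
      · rcases eq_or_lt_of_le hy with rfl | hy
        · exact Or.inl rfl
        · exact Or.inr (mem_iff_lt_rowLen.mpr hy)
      · have := μ.rowLen_anti x' (x - 1) (by omega)
        exact Or.inr (mem_iff_lt_rowLen.mpr (by omega))
    · exact Or.inr (μ.up_left_mem hx hy hxy)

lemma isLowerSet_erase_iff {c : ℕ × ℕ} (hc : c ∈ μ) :
    IsLowerSet (↑(μ.cells.erase c) : Set (ℕ × ℕ)) ↔
      c.1 ∈ μ.removableRows ∧ c.2 + 1 = μ.rowLen c.1 := by
  obtain ⟨i, j⟩ := c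
  have hj : j < μ.rowLen i := mem_iff_lt_rowLen.mp hc
  simp only [mem_removableRows, IsLowerSet, coe_erase, Set.mem_sdiff, mem_coe, mem_cells,
    Set.mem_singleton_iff]
  constructor
  · intro h
    have hj' : j + 1 = μ.rowLen i := by
      by_contra hne
      exact (h (show (i, j) ≤ (i, j + 1) from ⟨le_rfl, by omega⟩)
        ⟨mem_iff_lt_rowLen.mpr (by omega), by simp⟩).2 rfl
    refine ⟨not_le.mp fun hle => ?_, hj'⟩
    exact (h (show (i, j) ≤ (i + 1, j) from ⟨by omega, le_rfl⟩)
      ⟨mem_iff_lt_rowLen.mpr (by omega), by simp⟩).2 rfl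
  · rintro ⟨hrow, hj'⟩ ⟨x, y⟩ ⟨x', y'⟩ ⟨hx, hy⟩ ⟨hxy, hne⟩
    simp only at hx hy
    refine ⟨μ.up_left_mem hx hy hxy, fun heq => ?_⟩
    obtain ⟨rfl, rfl⟩ := Prod.mk.inj heq
    have := mem_iff_lt_rowLen.mp hxy
    rcases eq_or_lt_of_le hx with rfl | hx
    · exact hne (by rw [show y = y' by omega])
    · have := μ.rowLen_anti (x' + 1) x (by omega)
      omega

lemma rowLen_notMem (μ : YoungDiagram) (i : ℕ) : (i, μ.rowLen i) ∉ μ := by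
  simp [mem_iff_lt_rowLen]

lemma rowLen_sub_one_mem {i : ℕ} (hi : i ∈ μ.removableRows) : (i, μ.rowLen i - 1) ∈ μ := by
  have := mem_removableRows.mp hi
  exact mem_iff_lt_rowLen.mpr (by omega)

lemma isLowerSet_insert_rowLen {i : ℕ} (hi : i ∈ μ.addableRows) :
    IsLowerSet (↑(insert (i, μ.rowLen i) μ.cells) : Set (ℕ × ℕ)) :=
  (isLowerSet_insert_iff (μ.rowLen_notMem i)).mpr ⟨hi, rfl⟩

lemma isLowerSet_erase_rowLen_sub_one {i : ℕ} (hi : i ∈ μ.removableRows) :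
    IsLowerSet (↑(μ.cells.erase (i, μ.rowLen i - 1)) : Set (ℕ × ℕ)) := by
  refine (isLowerSet_erase_iff (rowLen_sub_one_mem hi)).mpr ⟨hi, ?_⟩
  have := mem_removableRows.mp hi
  dsimp only
  omega

instance : DecidableEq YoungDiagram := fun μ ν =>
  decidable_of_iff (μ.cells = ν.cells) YoungDiagram.ext_iff.symm

open scoped Classical in
/-- `⊥` if `s` is not a lower set. -/
noncomputable def ofCells (s : Finset (ℕ × ℕ)) : YoungDiagram :=
  if h : IsLowerSet (s : Set (ℕ × ℕ)) then ⟨s, h⟩ else ⊥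

lemma cells_ofCells {s : Finset (ℕ × ℕ)} (h : IsLowerSet (s : Set (ℕ × ℕ))) :
    (ofCells s).cells = s := by
  rw [ofCells, dif_pos h]

noncomputable def upperCovers (μ : YoungDiagram) : Finset YoungDiagram :=
  μ.addableRows.image fun i => ofCells (insert (i, μ.rowLen i) μ.cells)

noncomputable def lowerCovers (μ : YoungDiagram) : Finset YoungDiagram :=
  μ.removableRows.image fun i => ofCells (μ.cells.erase (i, μ.rowLen i - 1))

lemma addsBox_iff_exists_erase : ν.AddsBox μ ↔ ∃ c ∈ μ, ν.cells = μ.cells.erase c := by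
  rw [addsBox_iff_exists_insert]
  constructor
  · rintro ⟨c, hc, hμ⟩
    exact ⟨c, (mem_cells c).mp (hμ ▸ mem_insert_self c ν.cells),
      by rw [hμ, erase_insert ((mem_cells c).not.mpr hc)]⟩
  · rintro ⟨c, hc, hν⟩
    exact ⟨c, fun h => by simpa [hν] using (mem_cells c).mpr h,
      by rw [hν, insert_erase ((mem_cells c).mpr hc)]⟩

lemma mem_upperCovers : ν ∈ μ.upperCovers ↔ μ.AddsBox ν := by
  rw [addsBox_iff_exists_insert, upperCovers, mem_image]
  constructor
  · rintro ⟨i, hi, rfl⟩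
    exact ⟨_, μ.rowLen_notMem i, cells_ofCells (isLowerSet_insert_rowLen hi)⟩
  · rintro ⟨c, hc, hν⟩
    obtain ⟨hi, hc2⟩ := (isLowerSet_insert_iff hc).mp (hν ▸ ν.isLowerSet)
    refine ⟨c.1, hi, YoungDiagram.ext ?_⟩
    rw [← hc2, cells_ofCells (hν ▸ ν.isLowerSet), hν]

lemma mem_lowerCovers : ν ∈ μ.lowerCovers ↔ ν.AddsBox μ := by
  rw [addsBox_iff_exists_erase, lowerCovers, mem_image]
  constructor
  · rintro ⟨i, hi, rfl⟩
    exact ⟨_, rowLen_sub_one_mem hi, cells_ofCells (isLowerSet_erase_rowLen_sub_one hi)⟩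
  · rintro ⟨c, hc, hν⟩
    obtain ⟨hi, hc2⟩ := (isLowerSet_erase_iff hc).mp (hν ▸ ν.isLowerSet)
    refine ⟨c.1, hi, YoungDiagram.ext ?_⟩
    rw [show μ.rowLen c.1 - 1 = c.2 by omega, cells_ofCells (hν ▸ ν.isLowerSet), hν]

lemma card_upperCovers (μ : YoungDiagram) : #μ.upperCovers = #μ.lowerCovers + 1 := by
  rw [upperCovers, lowerCovers, card_image_of_injOn, card_image_of_injOn, card_addableRows]
  · intro i hi j hj h
    have := congrArg (fun ν : YoungDiagram => (i, μ.rowLen i - 1) ∈ ν.cells) h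
    simp only [cells_ofCells (isLowerSet_erase_rowLen_sub_one hi),
      cells_ofCells (isLowerSet_erase_rowLen_sub_one hj)] at this
    simp [rowLen_sub_one_mem hi] at this
    exact this.1
  · intro i hi j hj h
    have := congrArg (fun ν : YoungDiagram => (i, μ.rowLen i) ∈ ν.cells) h
    simp only [cells_ofCells (isLowerSet_insert_rowLen hi),
      cells_ofCells (isLowerSet_insert_rowLen hj)] at this
    simp [μ.rowLen_notMem] at this
    exact this.1

lemma eq_sup_of_addsBox (hμ : μ.AddsBox ν) (hρ : ρ.AddsBox ν) (hne : μ ≠ ρ) : ν = μ ⊔ ρ := by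
  refine (eq_of_le_of_card_le (sup_le hμ.1 hρ.1) (not_lt.mp fun hlt => hne ?_)).symm
  have := hμ.2
  have := hρ.2
  exact (eq_of_le_of_card_le le_sup_left (by omega)).trans
    (eq_of_le_of_card_le le_sup_right (by omega)).symm

lemma eq_inf_of_addsBox (hμ : κ.AddsBox μ) (hρ : κ.AddsBox ρ) (hne : μ ≠ ρ) : κ = μ ⊓ ρ := by
  refine eq_of_le_of_card_le (le_inf hμ.1 hρ.1) (not_lt.mp fun hlt => hne ?_)
  have := hμ.2
  have := hρ.2
  exact (eq_of_le_of_card_le inf_le_left (by omega)).symm.trans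
    (eq_of_le_of_card_le inf_le_right (by omega))

lemma sup_mem_upperCovers_inter_iff :
    μ ⊔ ρ ∈ μ.upperCovers ∩ ρ.upperCovers ↔ μ ⊓ ρ ∈ μ.lowerCovers ∩ ρ.lowerCovers := by
  simp only [mem_inter, mem_upperCovers, mem_lowerCovers, AddsBox, le_sup_left, le_sup_right,
    inf_le_left, inf_le_right, true_and]
  have := card_sup_add_card_inf μ ρ
  omega

theorem card_upperCovers_inter (μ ρ : YoungDiagram) :
    #(μ.upperCovers ∩ ρ.upperCovers) =
      #(μ.lowerCovers ∩ ρ.lowerCovers) + if ρ = μ then 1 else 0 := by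
  by_cases h : ρ = μ
  · subst h
    simp [card_upperCovers]
  have hU : μ.upperCovers ∩ ρ.upperCovers ⊆ {μ ⊔ ρ} := fun ν hν => by
    rw [mem_inter, mem_upperCovers, mem_upperCovers] at hν
    exact mem_singleton.mpr (eq_sup_of_addsBox hν.1 hν.2 (Ne.symm h))
  have hD : μ.lowerCovers ∩ ρ.lowerCovers ⊆ {μ ⊓ ρ} := fun κ hκ => by
    rw [mem_inter, mem_lowerCovers, mem_lowerCovers] at hκ
    exact mem_singleton.mpr (eq_inf_of_addsBox hκ.1 hκ.2 (Ne.symm h))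
  rw [card_eq_ite_of_subset_singleton hU, card_eq_ite_of_subset_singleton hD, if_neg h, add_zero]
  exact if_congr sup_mem_upperCovers_inter_iff rfl rfl

def IsStep (μ ν : YoungDiagram) : Prop := μ.AddsBox ν ∨ ν.AddsBox μ

lemma isStep_iff_mem_union : μ.IsStep ν ↔ ν ∈ μ.upperCovers ∪ μ.lowerCovers := by
  rw [mem_union, mem_upperCovers, mem_lowerCovers, IsStep]

lemma disjoint_upperCovers_lowerCovers (μ : YoungDiagram) :
    Disjoint μ.upperCovers μ.lowerCovers :=
  disjoint_left.mpr fun ν hup hdown => by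
    have := (mem_upperCovers.mp hup).2
    have := (mem_lowerCovers.mp hdown).2
    omega

lemma card_lt_of_mem_lowerCovers (h : ν ∈ μ.lowerCovers) : ν.card < μ.card := by
  have := (mem_lowerCovers.mp h).2
  omega

lemma lowerCovers_bot : (⊥ : YoungDiagram).lowerCovers = ∅ :=
  eq_empty_of_forall_notMem fun _ h => Nat.not_lt_zero _ (card_lt_of_mem_lowerCovers h)

lemma ne_bot_of_mem_upperCovers (h : ν ∈ μ.upperCovers) : ν ≠ ⊥ := by
  intro hν
  have := (mem_upperCovers.mp h).2
  rw [card_eq_zero_iff.mpr hν] at this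
  omega

lemma mem_lowerCovers_iff_mem_upperCovers : ν ∈ μ.lowerCovers ↔ μ ∈ ν.upperCovers := by
  rw [mem_lowerCovers, mem_upperCovers]

/-- The number `f^μ` of standard Young tableaux of shape `μ`, counted as saturated chains from
`⊥` to `μ`. -/
noncomputable def numSYT (μ : YoungDiagram) : ℕ :=
  if μ = ⊥ then 1 else ∑ ν ∈ μ.lowerCovers.attach, numSYT ν
termination_by μ.card
decreasing_by exact card_lt_of_mem_lowerCovers ν.2

lemma numSYT_bot : numSYT ⊥ = 1 := by
  rw [numSYT, if_pos rfl]

lemma numSYT_eq_sum (h : μ ≠ ⊥) : numSYT μ = ∑ ν ∈ μ.lowerCovers, numSYT ν := by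
  rw [numSYT, if_neg h, sum_attach μ.lowerCovers numSYT]

lemma card_mul_numSYT (μ : YoungDiagram) :
    μ.card * numSYT μ = ∑ ν ∈ μ.lowerCovers, (ν.card + 1) * numSYT ν := by
  rcases eq_or_ne μ ⊥ with rfl | h
  · simp [lowerCovers_bot]
  rw [numSYT_eq_sum h, mul_sum]
  exact sum_congr rfl fun ν hν => by rw [(mem_lowerCovers.mp hν).2]

theorem sum_numSYT_upperCovers (μ : YoungDiagram) :
    ∑ ν ∈ μ.upperCovers, numSYT ν = (μ.card + 1) * numSYT μ := by
  set S := μ.upperCovers.biUnion lowerCovers ∪ μ.lowerCovers.biUnion upperCovers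
  -- Paths `μ ⋖ ν ⋗ ρ` and `μ ⋗ κ ⋖ ρ`, grouped by their endpoint `ρ ∈ S`.
  have hup : ∑ ν ∈ μ.upperCovers, numSYT ν =
      ∑ ρ ∈ S, #(μ.upperCovers ∩ ρ.upperCovers) * numSYT ρ := by
    rw [sum_congr rfl fun ν hν => numSYT_eq_sum (ne_bot_of_mem_upperCovers hν)]
    exact sum_sum_eq_sum_card_inter_smul S (fun _ _ => mem_lowerCovers_iff_mem_upperCovers)
      (fun ν hν => (subset_biUnion_of_mem lowerCovers hν).trans subset_union_left) numSYT
  have hdown : ∑ κ ∈ μ.lowerCovers, ∑ ρ ∈ κ.upperCovers, numSYT ρ =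
      ∑ ρ ∈ S, #(μ.lowerCovers ∩ ρ.lowerCovers) * numSYT ρ :=
    sum_sum_eq_sum_card_inter_smul S (fun _ _ => mem_lowerCovers_iff_mem_upperCovers.symm)
      (fun κ hκ => (subset_biUnion_of_mem upperCovers hκ).trans subset_union_right) numSYT
  have hdown' : ∑ κ ∈ μ.lowerCovers, ∑ ρ ∈ κ.upperCovers, numSYT ρ = μ.card * numSYT μ := by
    rw [card_mul_numSYT]
    exact sum_congr rfl fun κ hκ => sum_numSYT_upperCovers κ
  have hμS : μ ∈ S := by
    obtain ⟨ν, hν⟩ : μ.upperCovers.Nonempty := by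
      rw [← card_pos, card_upperCovers]; exact Nat.succ_pos _
    exact mem_union_left _ (mem_biUnion.mpr ⟨ν, hν, mem_lowerCovers_iff_mem_upperCovers.mpr hν⟩)
  calc ∑ ν ∈ μ.upperCovers, numSYT ν
      = ∑ ρ ∈ S, (#(μ.lowerCovers ∩ ρ.lowerCovers) * numSYT ρ +
          if ρ = μ then numSYT ρ else 0) := by
        rw [hup]
        refine sum_congr rfl fun ρ _ => ?_
        rw [card_upperCovers_inter]
        split_ifs <;> ring
    _ = μ.card * numSYT μ + numSYT μ := by
        rw [sum_add_distrib, ← hdown, hdown', sum_ite_eq' S μ, if_pos hμS]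
    _ = (μ.card + 1) * numSYT μ := by ring
termination_by μ.card
decreasing_by exact card_lt_of_mem_lowerCovers hκ

end YoungDiagram

/-- `(n - 1)‼` for even `n` and `0` for odd `n`. -/
def numMatchings : ℕ → ℕ
  | 0 => 1
  | 1 => 0
  | n + 2 => (n + 1) * numMatchings n

lemma numMatchings_succ (n : ℕ) : numMatchings (n + 1) = n * numMatchings (n - 1) := by
  cases n <;> rfl

lemma choose_mul_numMatchings_succ (n k : ℕ) :
    (n + 1).choose (k + 1) * numMatchings (n - k) =
      n.choose (k + 2) * (k + 2) * numMatchings (n - (k + 2)) +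
        n.choose k * numMatchings (n - k) := by
  rw [Nat.choose_succ_succ', add_mul, add_comm]
  congr 1
  rcases lt_or_ge n (k + 2) with hn | hn
  · rw [Nat.choose_eq_zero_of_lt hn, zero_mul, zero_mul]
    rcases lt_or_ge n (k + 1) with hn' | hn'
    · rw [Nat.choose_eq_zero_of_lt hn', zero_mul]
    · rw [show n - k = 1 by omega, numMatchings, mul_zero]
  · obtain ⟨m, rfl⟩ : ∃ m, n = m + (k + 2) := ⟨n - (k + 2), by omega⟩
    rw [show m + (k + 2) - k = m + 2 by omega, Nat.add_sub_cancel, numMatchings,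
      Nat.choose_succ_right_eq, show m + (k + 2) - (k + 1) = m + 1 by omega]
    ring

lemma Fintype.card_subtype_ne_and_ne {α : Type*} [Fintype α] [DecidableEq α] {a b : α}
    (hab : a ≠ b) :
    Fintype.card {x // x ≠ a ∧ x ≠ b} = Fintype.card α - 2 := by
  simp [Fintype.card_subtype, filter_and, filter_ne', hab, Nat.sub_sub]

namespace Equiv.Perm

variable {α : Type*} [DecidableEq α] {a b : α}

lemma swap_mul_ofSubtype_apply_of_mem (σ : Perm {x // x ≠ a ∧ x ≠ b}) {x : α}
    (hx : x ≠ a ∧ x ≠ b) : (swap a b * ofSubtype σ) x = σ ⟨x, hx⟩ := by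
  rw [mul_apply, ofSubtype_apply_of_mem σ hx]
  exact swap_apply_of_ne_of_ne (σ _).2.1 (σ _).2.2

lemma swap_mul_ofSubtype_apply_left (σ : Perm {x // x ≠ a ∧ x ≠ b}) :
    (swap a b * ofSubtype σ) a = b := by
  simp [ofSubtype_apply_of_not_mem]

lemma swap_mul_ofSubtype_apply_right (σ : Perm {x // x ≠ a ∧ x ≠ b}) :
    (swap a b * ofSubtype σ) b = a := by
  simp [ofSubtype_apply_of_not_mem]

end Equiv.Perm

abbrev FpfInvolution (α : Type*) : Type _ := {π : Perm α // π * π = 1 ∧ ∀ x, π x ≠ x}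

namespace FpfInvolution

variable {α : Type*}

lemma apply_apply (π : FpfInvolution α) (x : α) : π.1 (π.1 x) = x := by
  rw [← Perm.mul_apply, π.2.1, Perm.one_apply]

lemma apply_ne_and_ne_iff (π : FpfInvolution α) {a b : α} (h : π.1 a = b) (x : α) :
    (π.1 x ≠ a ∧ π.1 x ≠ b) ↔ (x ≠ a ∧ x ≠ b) := by
  have h₁ : π.1 x = a ↔ x = b := by
    rw [← h]; exact ⟨fun e => by rw [← e, apply_apply], fun e => by rw [e, apply_apply]⟩
  have h₂ : π.1 x = b ↔ x = a := by rw [← h]; exact π.1.injective.eq_iff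
  rw [ne_eq, ne_eq, h₁, h₂, and_comm]

variable [DecidableEq α]

def fiberEquiv {a b : α} (hab : a ≠ b) :
    {π : FpfInvolution α // π.1 a = b} ≃ FpfInvolution {x // x ≠ a ∧ x ≠ b} where
  toFun π :=
    ⟨π.1.1.subtypePerm (apply_ne_and_ne_iff π.1 π.2),
      Perm.ext fun x => Subtype.ext (apply_apply π.1 x),
      fun x h => π.1.2.2 x (congrArg Subtype.val h)⟩
  invFun σ := by
    refine ⟨⟨swap a b * Perm.ofSubtype σ.1, Perm.ext fun x => ?_, fun x => ?_⟩,
      Perm.swap_mul_ofSubtype_apply_left σ.1⟩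
    · rw [Perm.mul_apply, Perm.one_apply]
      rcases eq_or_ne x a with rfl | hxa
      · rw [Perm.swap_mul_ofSubtype_apply_left, Perm.swap_mul_ofSubtype_apply_right]
      rcases eq_or_ne x b with rfl | hxb
      · rw [Perm.swap_mul_ofSubtype_apply_right, Perm.swap_mul_ofSubtype_apply_left]
      rw [Perm.swap_mul_ofSubtype_apply_of_mem σ.1 ⟨hxa, hxb⟩,
        Perm.swap_mul_ofSubtype_apply_of_mem σ.1 (σ.1 _).2, apply_apply σ]
    · rcases eq_or_ne x a with rfl | hxa
      · rw [Perm.swap_mul_ofSubtype_apply_left]; exact hab.symm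
      rcases eq_or_ne x b with rfl | hxb
      · rw [Perm.swap_mul_ofSubtype_apply_right]; exact hab
      rw [Perm.swap_mul_ofSubtype_apply_of_mem σ.1 ⟨hxa, hxb⟩]
      exact fun h => σ.2.2 _ (Subtype.ext h)
  left_inv := by
    rintro ⟨π, rfl⟩
    ext x
    dsimp only
    rcases eq_or_ne x a with rfl | hxa
    · rw [Perm.swap_mul_ofSubtype_apply_left]
    rcases eq_or_ne x (π.1 a) with rfl | hxb
    · rw [Perm.swap_mul_ofSubtype_apply_right, apply_apply]
    rw [Perm.swap_mul_ofSubtype_apply_of_mem _ ⟨hxa, hxb⟩, Perm.subtypePerm_apply]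
  right_inv σ := by
    ext x
    simp [Perm.swap_mul_ofSubtype_apply_of_mem σ x.2]

variable [Fintype α]

lemma card_eq_sum_card_fiber (a : α) :
    Nat.card (FpfInvolution α) =
      ∑ b ∈ univ.erase a, Nat.card {π : FpfInvolution α // π.1 a = b} := by
  have : IsEmpty {π : FpfInvolution α // π.1 a = a} := ⟨fun π => π.1.2.2 a π.2⟩
  rw [← Nat.card_congr (sigmaFiberEquiv fun π : FpfInvolution α => π.1 a), Nat.card_sigma,
    ← add_sum_erase _ _ (mem_univ a), Nat.card_of_isEmpty, zero_add]

end FpfInvolution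

open FpfInvolution in
theorem card_fpfInvolution (α : Type*) [Fintype α] [DecidableEq α] :
    Nat.card (FpfInvolution α) = numMatchings (Fintype.card α) := by
  induction h : Fintype.card α using Nat.strong_induction_on generalizing α with
  | _ n ih =>
  cases n with
  | zero =>
    have : IsEmpty α := Fintype.card_eq_zero_iff.mp h
    rw [numMatchings, Nat.card_eq_one_iff_unique]
    exact ⟨inferInstance, ⟨⟨1, mul_one 1, isEmptyElim⟩⟩⟩
  | succ n =>
    obtain ⟨a⟩ : Nonempty α := Fintype.card_pos_iff.mp (by omega)
    have hfiber : ∀ b ∈ univ.erase a, Nat.card {π : FpfInvolution α // π.1 a = b} =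
        numMatchings (n - 1) := fun b hb => by
      have hab := (ne_of_mem_erase hb).symm
      rw [Nat.card_congr (fiberEquiv hab),
        ih (n - 1) (by omega) _ ((Fintype.card_subtype_ne_and_ne hab).trans (by omega))]
    rw [card_eq_sum_card_fiber a, sum_congr rfl hfiber, sum_const, card_erase_of_mem (mem_univ a),
      card_univ, h, numMatchings_succ, smul_eq_mul, Nat.add_sub_cancel]

open YoungDiagram

def IsOscillatingTableauFrom (n : ℕ) (l : YoungDiagram) (μ : Fin (n + 1) → YoungDiagram) :
    Prop :=
  μ 0 = l ∧ μ (Fin.last n) = ⊥ ∧ ∀ i : Fin n, (μ i.castSucc).IsStep (μ i.succ)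

lemma isOscillatingTableau_iff {n : ℕ} {μ : Fin (n + 1) → YoungDiagram} :
    IsOscillatingTableau n μ ↔ IsOscillatingTableauFrom n ⊥ μ :=
  Iff.rfl

namespace IsOscillatingTableauFrom

instance (l : YoungDiagram) : Finite {ν // l.IsStep ν} :=
  Finite.of_equiv _ (Equiv.subtypeEquivRight fun _ => isStep_iff_mem_union.symm)

def consEquiv (n : ℕ) (l : YoungDiagram) :
    {μ // IsOscillatingTableauFrom (n + 1) l μ} ≃
      Σ ν : {ν // l.IsStep ν}, {μ // IsOscillatingTableauFrom n ν μ} where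
  toFun μ := ⟨⟨Fin.tail μ.1 0, by simpa [Fin.tail, μ.2.1] using μ.2.2.2 0⟩,
    ⟨Fin.tail μ.1, rfl, by simpa [Fin.tail] using μ.2.2.1,
      fun i => by simpa [Fin.tail, ← Fin.succ_castSucc] using μ.2.2.2 i.succ⟩⟩
  invFun νμ := ⟨Fin.cons l νμ.2.1, Fin.cons_zero _ _,
    by simpa [← Fin.succ_last] using νμ.2.2.2.1,
    fun i => by
      induction i using Fin.cases with
      | zero => simpa [νμ.2.2.1] using νμ.1.2
      | succ i => simpa [← Fin.succ_castSucc] using νμ.2.2.2.2 i⟩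
  left_inv μ := Subtype.ext <|
    (congrArg (Fin.cons · (Fin.tail μ.1)) μ.2.1.symm).trans (Fin.cons_self_tail μ.1)
  right_inv := by
    rintro ⟨⟨ν, hν⟩, ⟨μ, hμ⟩⟩
    obtain rfl : μ 0 = ν := hμ.1
    rfl

instance (l : YoungDiagram) : Subsingleton {μ // IsOscillatingTableauFrom 0 l μ} :=
  ⟨fun μ ν => Subtype.ext (funext fun i => by rw [Fin.fin_one_eq_zero i, μ.2.1, ν.2.1])⟩

instance finite (n : ℕ) (l : YoungDiagram) : Finite {μ // IsOscillatingTableauFrom n l μ} := by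
  induction n generalizing l with
  | zero => exact Finite.of_subsingleton
  | succ n ih => exact Finite.of_equiv _ (consEquiv n l).symm

lemma card_zero (l : YoungDiagram) :
    Nat.card {μ // IsOscillatingTableauFrom 0 l μ} = if l = ⊥ then 1 else 0 := by
  split_ifs with h
  · subst h
    exact Nat.card_eq_one_iff_unique.mpr ⟨inferInstance, ⟨⟨fun _ => ⊥, rfl, rfl, finZeroElim⟩⟩⟩
  · have : IsEmpty {μ // IsOscillatingTableauFrom 0 l μ} :=
      ⟨fun μ => h (μ.2.1.symm.trans μ.2.2.1)⟩
    exact Nat.card_of_isEmpty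

lemma card_succ (n : ℕ) (l : YoungDiagram) :
    Nat.card {μ // IsOscillatingTableauFrom (n + 1) l μ} =
      ∑ ν ∈ l.upperCovers, Nat.card {μ // IsOscillatingTableauFrom n ν μ} +
        ∑ ν ∈ l.lowerCovers, Nat.card {μ // IsOscillatingTableauFrom n ν μ} := by
  have := Fintype.ofFinite {ν // l.IsStep ν}
  rw [Nat.card_congr (consEquiv n l), Nat.card_sigma,
    ← sum_union (disjoint_upperCovers_lowerCovers l),
    sum_subtype (l.upperCovers ∪ l.lowerCovers) (fun ν => isStep_iff_mem_union.symm)]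

theorem card_eq (n : ℕ) (l : YoungDiagram) :
    Nat.card {μ // IsOscillatingTableauFrom n l μ} =
      n.choose l.card * numSYT l * numMatchings (n - l.card) := by
  induction n generalizing l with
  | zero =>
    rw [card_zero]
    split_ifs with h
    · simp [h, card_bot, numSYT_bot, numMatchings]
    · rw [Nat.choose_eq_zero_of_lt (Nat.pos_of_ne_zero (card_eq_zero_iff.not.mpr h))]
      simp
  | succ n ih =>
    have hup : ∑ ν ∈ l.upperCovers, Nat.card {μ // IsOscillatingTableauFrom n ν μ} =
        n.choose (l.card + 1) * ((l.card + 1) * numSYT l) * numMatchings (n - (l.card + 1)) := by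
      rw [← sum_numSYT_upperCovers, mul_sum, sum_mul]
      exact sum_congr rfl fun ν hν => by rw [ih, (mem_upperCovers.mp hν).2]
    rw [card_succ, hup]
    rcases eq_or_ne l ⊥ with rfl | hl
    · rw [lowerCovers_bot, sum_empty, card_bot, numSYT_bot]
      simp [numMatchings_succ]
    obtain ⟨k, hk⟩ : ∃ k, l.card = k + 1 :=
      Nat.exists_eq_add_one.mpr (Nat.pos_of_ne_zero (card_eq_zero_iff.not.mpr hl))
    have hdown : ∑ ν ∈ l.lowerCovers, Nat.card {μ // IsOscillatingTableauFrom n ν μ} =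
        n.choose k * numSYT l * numMatchings (n - k) := by
      rw [numSYT_eq_sum hl, mul_sum, sum_mul]
      refine sum_congr rfl fun ν hν => ?_
      rw [ih, show ν.card = k by have := (mem_lowerCovers.mp hν).2; omega]
    rw [hdown, hk, Nat.add_sub_add_right, show k + 1 + 1 = k + 2 from rfl,
      mul_right_comm ((n + 1).choose _), choose_mul_numMatchings_succ]
    ring

end IsOscillatingTableauFrom

theorem fpf_involutions_equiv_oscillating_general (n : ℕ) :
    Nonempty ({π : Equiv.Perm (Fin n) // π * π = 1 ∧ ∀ i, π i ≠ i} ≃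
      {μ : Fin (n + 1) → YoungDiagram // IsOscillatingTableau n μ}) := by
  have hfpf : Nat.card {π : Equiv.Perm (Fin n) // π * π = 1 ∧ ∀ i, π i ≠ i} = numMatchings n := by
    simpa using card_fpfInvolution (Fin n)
  let e : {μ // IsOscillatingTableau n μ} ≃ {μ // IsOscillatingTableauFrom n ⊥ μ} :=
    Equiv.subtypeEquivRight fun _ => isOscillatingTableau_iff
  have hosc : Nat.card {μ : Fin (n + 1) → YoungDiagram // IsOscillatingTableau n μ} =
      numMatchings n := by
    rw [Nat.card_congr e, IsOscillatingTableauFrom.card_eq, card_bot, numSYT_bot]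
    simp
  have : Finite {μ // IsOscillatingTableau n μ} := Finite.of_equiv _ e.symm
  exact Finite.card_eq.mp (hfpf.trans hosc.symm)

/-- For n even there is a bijection between fixed-point-free involutions of S_n and
oscillating tableaux of length n. -/
theorem fpf_involutions_equiv_oscillating (n : ℕ) (hn : Even n) :
    Nonempty ({π : Equiv.Perm (Fin n) // π * π = 1 ∧ ∀ i, π i ≠ i} ≃
      {μ : Fin (n + 1) → YoungDiagram // IsOscillatingTableau n μ}) :=
  fpf_involutions_equiv_oscillating_general n
end

section
/- If f : ℤ → ℤ is a bijection satisfying f(x+n) = f(x)+n for all x (an affine permutation), and f∘f equals the shift x ↦ x+n, then the induced permutation of ℤ/nℤ (reducing f mod n) is a fixed-point-free involution when n is even. -/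
/-! Since `f` commutes with `x ↦ x + n`, it respects congruence mod `n` and descends to
`ℤ/nℤ`; there `f ∘ f = shift_n` becomes the identity. A fixed point `f x = x + n c` would give
`x + n = f (f x) = x + 2 n c`, i.e. `2 c = 1`. -/

theorem map_add_zsmul_of_map_add {G : Type*} [AddGroup G] {f : G → G} {a : G}
    (hf : ∀ x, f (x + a) = f x + a) (c : ℤ) (x : G) : f (x + c • a) = f x + c • a := by
  induction c using Int.induction_on generalizing x with
  | zero => simp
  | succ k ih => rw [add_zsmul, one_zsmul, ← add_assoc, hf, ih, add_assoc]
  | pred k ih =>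
    have h := hf (x + (-(k : ℤ) - 1) • a)
    rw [add_assoc, sub_zsmul, one_zsmul, neg_add_cancel_right, ih] at h
    rw [sub_zsmul, one_zsmul]
    exact (eq_add_neg_of_add_eq h.symm).trans (add_assoc _ _ _)

section Periodic

variable {n : ℕ} {f : ℤ → ℤ}

theorem Int.ModEq.map_of_map_add (hper : ∀ x : ℤ, f (x + n) = f x + n) {x y : ℤ}
    (h : x ≡ y [ZMOD n]) : f x ≡ f y [ZMOD n] := by
  obtain ⟨c, hc⟩ := h.dvd
  have hy : y = x + c • (n : ℤ) := by rw [smul_eq_mul]; linarith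
  rw [hy, map_add_zsmul_of_map_add hper, smul_eq_mul, mul_comm]
  exact Int.modEq_add_fac_self.symm

theorem not_map_modEq_self_of_map_map (hn : 0 < n) (hper : ∀ x : ℤ, f (x + n) = f x + n)
    (hsq : ∀ x : ℤ, f (f x) = x + n) (x : ℤ) : ¬ f x ≡ x [ZMOD n] := by
  intro h
  obtain ⟨c, hc⟩ := h.symm.dvd
  have hfx : f x = x + c • (n : ℤ) := by rw [smul_eq_mul]; linarith
  have h2c : (n : ℤ) * (2 * c) = n * 1 := by
    have := hsq x
    rw [hfx, map_add_zsmul_of_map_add hper, hfx, smul_eq_mul] at this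
    linarith
  have : 2 * c = 1 := mul_left_cancel₀ (by exact_mod_cast hn.ne') h2c
  omega

variable (n f) in
/-- Computed on an integer representative, so it is independent of the choice only when `f`
commutes with `x ↦ x + n` (`inducedZMod_intCast`). -/
def inducedZMod (z : ZMod n) : ZMod n := (f z.cast : ZMod n)

theorem inducedZMod_intCast (hper : ∀ x : ℤ, f (x + n) = f x + n) (x : ℤ) :
    inducedZMod n f x = f x := by
  refine (ZMod.intCast_eq_intCast_iff _ _ n).2 (Int.ModEq.map_of_map_add hper ?_)
  rw [← ZMod.intCast_eq_intCast_iff, ZMod.intCast_zmod_cast]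

theorem inducedZMod_involutive (hper : ∀ x : ℤ, f (x + n) = f x + n)
    (hsq : ∀ x : ℤ, f (f x) = x + n) : Function.Involutive (inducedZMod n f) := by
  intro z
  obtain ⟨x, rfl⟩ := ZMod.intCast_surjective z
  rw [inducedZMod_intCast hper, inducedZMod_intCast hper, hsq]
  simp

theorem inducedZMod_ne_self (hn : 0 < n) (hper : ∀ x : ℤ, f (x + n) = f x + n)
    (hsq : ∀ x : ℤ, f (f x) = x + n) (z : ZMod n) : inducedZMod n f z ≠ z := by
  obtain ⟨x, rfl⟩ := ZMod.intCast_surjective z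
  rw [inducedZMod_intCast hper, Ne, ZMod.intCast_eq_intCast_iff]
  exact not_map_modEq_self_of_map_map hn hper hsq x

end Periodic

theorem affine_permutation_square_shift_general (n : ℕ) (hn : 0 < n)
    (f : ℤ → ℤ)
    (hper : ∀ x : ℤ, f (x + n) = f x + n)
    (hsq : ∀ x : ℤ, f (f x) = x + n) :
    ∃ g : Equiv.Perm (ZMod n),
      (∀ x : ℤ, g (x : ZMod n) = (f x : ZMod n)) ∧ g * g = 1 ∧ ∀ z, g z ≠ z := by
  have hinv := inducedZMod_involutive hper hsq
  refine ⟨hinv.toPerm, inducedZMod_intCast hper, ?_, inducedZMod_ne_self hn hper hsq⟩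
  ext z
  exact hinv z

/-- If f is an affine permutation (a bijection ℤ → ℤ with f(x+n) = f(x)+n) whose square is
the shift x ↦ x+n, then for even n > 0 the induced permutation of ℤ/nℤ is a
fixed-point-free involution. -/
theorem affine_permutation_square_shift (n : ℕ) (hn : 0 < n) (hev : Even n)
    (f : ℤ → ℤ) (hbij : Function.Bijective f)
    (hper : ∀ x : ℤ, f (x + n) = f x + n)
    (hsq : ∀ x : ℤ, f (f x) = x + n) :
    ∃ g : Equiv.Perm (ZMod n),
      (∀ x : ℤ, g (x : ZMod n) = (f x : ZMod n)) ∧ g * g = 1 ∧ ∀ z, g z ≠ z :=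
  affine_permutation_square_shift_general n hn f hper hsq
end

section
/- Let μ be a weakly decreasing sequence of m integers and S ⊆ {1,…,m} a set of rows. Then sort(μ − 1_S) (subtracting 1 in the rows of S and sorting) is weakly decreasing and differs from μ by subtracting 1 in exactly |S| distinct positions; i.e., μ − sort(μ − 1_S) is a 0/1 vector with exactly |S| ones. -/
/-!
Sorting is monotone for the pointwise order and fixes weakly decreasing vectors, so
`μ - 1 ≤ μ - 1_S ≤ μ` gives `μ - 1 ≤ sort (μ - 1_S) ≤ μ` entrywise. Sorting also preserves
the sum, so the 0/1 vector `μ - sort (μ - 1_S)` has exactly `|S|` ones.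
-/

/-- The weakly decreasing rearrangement of an integer vector. -/
def sortDesc {m : ℕ} (v : Fin m → ℤ) : Fin m → ℤ :=
  fun i => - ((fun j => - v j) ∘ Tuple.sort (fun j => - v j)) i

open Finset

namespace Tuple

theorem comp_sort_le_comp_sort {n : ℕ} {α : Type*} [LinearOrder α] {f g : Fin n → α}
    (hfg : f ≤ g) : f ∘ sort f ≤ g ∘ sort g := by
  intro j
  -- the `j`-th entry of a sorted tuple is `≤ a` iff more than `j` entries are `≤ a`
  set a := (g ∘ sort g) j
  have hcard (h : Fin n → α) : #{i | (h ∘ sort h) i ≤ a} = #{i | h i ≤ a} :=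
    card_equiv (sort h) (by simp)
  rw [← lt_card_le_iff_apply_le_of_monotone (monotone_sort f), hcard]
  calc (j : ℕ) < #{i | g i ≤ a} := by
        rw [← hcard, lt_card_le_iff_apply_le_of_monotone (monotone_sort g)]
    _ ≤ #{i | f i ≤ a} := card_le_card fun i hi => by
        simpa using (hfg i).trans (mem_filter.1 hi).2

end Tuple

theorem Finset.sum_eq_card_filter_eq_one_of_zero_or_one {ι R : Type*}
    [AddCommMonoidWithOne R] [DecidableEq R] (s : Finset ι) (f : ι → R)
    (hf : ∀ i ∈ s, f i = 0 ∨ f i = 1) :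
    ∑ i ∈ s, f i = #{i ∈ s | f i = 1} := by
  rw [natCast_card_filter]
  refine sum_congr rfl fun i hi => ?_
  rcases hf i hi with h | h
  · rw [h, eq_comm, ite_eq_right_iff]
    exact Eq.symm
  · simp [h]

section sortDesc

variable {m : ℕ}

theorem sortDesc_eq_comp_sort (v : Fin m → ℤ) :
    sortDesc v = v ∘ Tuple.sort (fun j => -v j) := by
  funext i
  simp [sortDesc]

theorem sortDesc_monotone : Monotone (sortDesc (m := m)) := fun u v huv i =>
  neg_le_neg (Tuple.comp_sort_le_comp_sort (f := fun j => -v j) (g := fun j => -u j)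
    (fun j => neg_le_neg (huv j)) i)

theorem sortDesc_antitone (v : Fin m → ℤ) : Antitone (sortDesc v) := fun _ _ hab =>
  neg_le_neg (Tuple.monotone_sort (fun j => -v j) hab)

theorem sortDesc_eq_self {v : Fin m → ℤ} (hv : Antitone v) : sortDesc v = v := by
  rw [sortDesc_eq_comp_sort, Tuple.sort_eq_refl_iff_monotone.2 fun _ _ hab => neg_le_neg (hv hab)]
  rfl

theorem sum_sortDesc (v : Fin m → ℤ) : ∑ i, sortDesc v i = ∑ i, v i := by
  rw [sortDesc_eq_comp_sort]
  exact Equiv.sum_comp _ v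

end sortDesc

/-- Subtracting 1 from a weakly decreasing integer vector μ in the rows of S and sorting
yields a weakly decreasing vector that differs from μ by subtracting 1 in exactly |S|
distinct positions. -/
theorem sort_subtract_boxes (m : ℕ) (mu : Fin m → ℤ) (hmu : Antitone mu)
    (S : Finset (Fin m)) :
    Antitone (sortDesc fun i => mu i - if i ∈ S then 1 else 0) ∧
    (∀ i, mu i - sortDesc (fun t => mu t - if t ∈ S then 1 else 0) i = 0 ∨
          mu i - sortDesc (fun t => mu t - if t ∈ S then 1 else 0) i = 1) ∧
    (Finset.univ.filter
        (fun i => mu i - sortDesc (fun t => mu t - if t ∈ S then 1 else 0) i = 1)).card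
      = S.card := by
  set nu : Fin m → ℤ := fun t => mu t - if t ∈ S then 1 else 0
  have hlower : (fun t => mu t - 1) ≤ nu := fun t => by simp only [nu]; split_ifs <;> omega
  have hupper : nu ≤ mu := fun t => by simp only [nu]; split_ifs <;> omega
  have h01 (i : Fin m) : mu i - sortDesc nu i = 0 ∨ mu i - sortDesc nu i = 1 := by
    have h1 : sortDesc nu i ≤ mu i := by
      simpa only [sortDesc_eq_self hmu] using sortDesc_monotone hupper i
    have h2 : mu i - 1 ≤ sortDesc nu i := by
      simpa only [sortDesc_eq_self fun a b hab => sub_le_sub_right (hmu hab) 1]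
        using sortDesc_monotone hlower i
    omega
  refine ⟨sortDesc_antitone nu, h01, ?_⟩
  have hsum : ∑ i, (mu i - sortDesc nu i) = S.card := by
    simp [sum_sub_distrib, sum_sortDesc, nu]
  exact_mod_cast (sum_eq_card_filter_eq_one_of_zero_or_one _ _ fun i _ => h01 i).symm.trans hsum
end

section
/- In a 3-hive f on Δ_m whose NW boundary edge has differences ω_j (read SW to NE), the strip one step in from the NW edge has differences ω_j or ω_{j−1}; moreover the first case occurs if and only if ν_1 = λ_1 and the second if and only if ν_1 = λ_1 + 1, where λ and ν are the dominant weights along the other two sides. -/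
/-!
Along the NW edge (`k = 0`) write `e` for the differences `ω_j`, and along the strip `k = 1`
next to it write `g`. The two rhombi between consecutive steps of edge and strip give the
interlacing `e (t+1) ≤ g t ≤ e t`. Telescoping, `ν₁ - λ₁` is the total of `e` minus the total
of `g`, which interlacing squeezes between `e (m-1) ≥ 0` and `e 0 ≤ 1`. If the gap is `0`, all
the upper bounds `g t ≤ e t` are tight, so `g = ω_j`; if it is `1`, all the lower bounds are,
so `g = ω_{j-1}`.
-/

/-- The rhombus inequalities for an integer labeling of the lattice points of the triangle
Δ_m = {(i,j,k) : i,j,k ≥ 0, i+j+k = m}: for every unit rhombus, the sum across the short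
diagonal is at least the sum across the long diagonal.  (Values of `f` off the simplex
are irrelevant.) -/
def RhombusIneqs (m : ℕ) (f : ℕ → ℕ → ℕ → ℤ) : Prop :=
  (∀ a j c, a + j + c + 2 = m →
      f (a+2) j c + f a (j+1) (c+1) ≤ f (a+1) j (c+1) + f (a+1) (j+1) c) ∧
  (∀ i b c, i + b + c + 2 = m →
      f (i+1) (b+1) c + f i b (c+2) ≤ f i (b+1) (c+1) + f (i+1) b (c+1)) ∧
  (∀ i b c, i + b + c + 2 = m →
      f i (b+2) c + f (i+1) b (c+1) ≤ f i (b+1) (c+1) + f (i+1) (b+1) c)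

open Finset

section Interlacing

variable {α : Type*} [AddCommGroup α] [PartialOrder α] [IsOrderedCancelAddMonoid α]
  {e g : ℕ → α} {n : ℕ}

theorem sum_sub_sum_mem_Icc_of_interlace (hlo : ∀ t < n, e (t+1) ≤ g t)
    (hhi : ∀ t < n, g t ≤ e t) :
    e n ≤ ∑ t ∈ range (n+1), e t - ∑ t ∈ range n, g t ∧
      ∑ t ∈ range (n+1), e t - ∑ t ∈ range n, g t ≤ e 0 := by
  constructor
  · rw [le_sub_iff_add_le, sum_range_succ, add_comm (e n)]
    gcongr with t ht
    exact hhi t (mem_range.1 ht)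
  · rw [sub_le_iff_le_add, sum_range_succ', add_comm _ (e 0)]
    gcongr with t ht
    exact hlo t (mem_range.1 ht)

theorem eq_of_interlace_of_sum_sub_sum_eq_last (hhi : ∀ t < n, g t ≤ e t)
    (h : ∑ t ∈ range (n+1), e t - ∑ t ∈ range n, g t = e n) (t : ℕ) (ht : t < n) :
    g t = e t := by
  rw [sum_range_succ, sub_eq_iff_eq_add, add_comm (e n)] at h
  refine (sum_eq_sum_iff_of_le fun t ht ↦ hhi t (mem_range.1 ht)).1 ?_ t (mem_range.2 ht)
  exact (add_right_cancel h).symm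

theorem eq_succ_of_interlace_of_sum_sub_sum_eq_first (hlo : ∀ t < n, e (t+1) ≤ g t)
    (h : ∑ t ∈ range (n+1), e t - ∑ t ∈ range n, g t = e 0) (t : ℕ) (ht : t < n) :
    g t = e (t+1) := by
  rw [sum_range_succ', sub_eq_iff_eq_add, add_comm (e 0)] at h
  refine ((sum_eq_sum_iff_of_le fun t ht ↦ hlo t (mem_range.1 ht)).1 ?_ t (mem_range.2 ht)).symm
  exact add_right_cancel h

end Interlacing

section NWStrip

variable {m : ℕ} {f : ℕ → ℕ → ℕ → ℤ}

def nwEdgeDiff (m : ℕ) (f : ℕ → ℕ → ℕ → ℤ) (t : ℕ) : ℤ :=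
  f (m - (t+1)) (t+1) 0 - f (m - t) t 0

def nwStripDiff (m : ℕ) (f : ℕ → ℕ → ℕ → ℤ) (t : ℕ) : ℤ :=
  f (m - 1 - (t+1)) (t+1) 1 - f (m - 1 - t) t 1

theorem RhombusIneqs.nwStripDiff_le_nwEdgeDiff (hf : RhombusIneqs m f) {t : ℕ}
    (ht : t + 1 < m) : nwStripDiff m f t ≤ nwEdgeDiff m f t := by
  have h := hf.1 (m - 2 - t) t 0 (by omega)
  rw [show m - 2 - t + 2 = m - t by omega, show m - 2 - t + 1 = m - 1 - t by omega] at h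
  unfold nwStripDiff nwEdgeDiff
  rw [show m - 1 - (t+1) = m - 2 - t by omega, show m - (t+1) = m - 1 - t by omega]
  linarith

theorem RhombusIneqs.nwEdgeDiff_succ_le_nwStripDiff (hf : RhombusIneqs m f) {t : ℕ}
    (ht : t + 1 < m) : nwEdgeDiff m f (t+1) ≤ nwStripDiff m f t := by
  have h := hf.2.2 (m - 2 - t) t 0 (by omega)
  rw [show m - 2 - t + 1 = m - 1 - t by omega] at h
  unfold nwStripDiff nwEdgeDiff
  rw [show m - 1 - (t+1) = m - 2 - t by omega, show m - (t+1+1) = m - 2 - t by omega,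
    show m - (t+1) = m - 1 - t by omega]
  linarith

theorem sum_nwEdgeDiff : ∑ t ∈ range m, nwEdgeDiff m f t = f 0 m 0 - f m 0 0 := by
  have h := sum_range_sub (fun t ↦ f (m - t) t 0) m
  simp only [Nat.sub_zero, Nat.sub_self] at h
  exact h

theorem sum_nwStripDiff : ∑ t ∈ range m, nwStripDiff (m+1) f t = f 0 m 1 - f m 0 1 := by
  have h := sum_range_sub (fun t ↦ f (m - t) t 1) m
  simp only [Nat.sub_zero, Nat.sub_self] at h
  exact h

end NWStrip

theorem ktw_strip_lemma_general (m j : ℕ) (hm : 1 ≤ m)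
    (lam nu : ℕ → ℤ) (f : ℕ → ℕ → ℕ → ℤ) (hf : RhombusIneqs m f)
    (homega : ∀ t, t < m → f (m - (t+1)) (t+1) 0 - f (m - t) t 0
        = if t < j then 1 else 0)
    (hlam : ∀ t, t < m → f 0 (m - (t+1)) (t+1) - f 0 (m - t) t = lam t)
    (hnu : ∀ t, t < m → f (m - (t+1)) 0 (t+1) - f (m - t) 0 t = nu t) :
    (nu 0 = lam 0 ∨ nu 0 = lam 0 + 1) ∧
    (nu 0 = lam 0 →
      ∀ t, t + 1 < m →
        f (m - 1 - (t+1)) (t+1) 1 - f (m - 1 - t) t 1 = if t < j then 1 else 0) ∧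
    (nu 0 = lam 0 + 1 →
      ∀ t, t + 1 < m →
        f (m - 1 - (t+1)) (t+1) 1 - f (m - 1 - t) t 1 = if t + 1 < j then 1 else 0) := by
  obtain ⟨n, rfl⟩ : ∃ n, m = n + 1 := ⟨m - 1, by omega⟩
  set e : ℕ → ℤ := fun t ↦ if t < j then 1 else 0 with he
  have hedge : ∀ t < n + 1, nwEdgeDiff (n+1) f t = e t := homega
  have hlo (t : ℕ) (ht : t < n) : e (t+1) ≤ nwStripDiff (n+1) f t :=
    (hedge (t+1) (by omega)).symm.trans_le (hf.nwEdgeDiff_succ_le_nwStripDiff (by omega))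
  have hhi (t : ℕ) (ht : t < n) : nwStripDiff (n+1) f t ≤ e t :=
    (hf.nwStripDiff_le_nwEdgeDiff (by omega)).trans_eq (hedge t (by omega))
  have hgap : ∑ t ∈ range (n+1), e t - ∑ t ∈ range n, nwStripDiff (n+1) f t = nu 0 - lam 0 := by
    rw [← sum_congr rfl fun t ht ↦ hedge t (mem_range.1 ht), sum_nwEdgeDiff, sum_nwStripDiff,
      ← hnu 0 (by omega), ← hlam 0 (by omega)]
    simp only [Nat.add_sub_cancel, Nat.sub_zero, zero_add]
    ring
  obtain ⟨hlast, hfirst⟩ := sum_sub_sum_mem_Icc_of_interlace hlo hhi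
  have he_nonneg : 0 ≤ e n := by simp only [he]; split_ifs <;> norm_num
  have he_le_one : e 0 ≤ 1 := by simp only [he]; split_ifs <;> norm_num
  refine ⟨by omega, fun h t ht ↦ ?_, fun h t ht ↦ ?_⟩
  · exact eq_of_interlace_of_sum_sub_sum_eq_last hhi (by omega) t (by omega)
  · exact eq_succ_of_interlace_of_sum_sub_sum_eq_first hlo (by omega) t (by omega)

/-- Lemma of Knutson–Tao–Woodward: in a 3-hive whose NW boundary edge has differences
ω_j (so its values increase by 1 for the first j steps and are constant thereafter), with
λ and ν the dominant weights along the other two sides, the strip one step in from the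
NW edge has differences ω_j or ω_{j−1}; the first case occurs iff ν₁ = λ₁ and the second
iff ν₁ = λ₁ + 1. -/
theorem ktw_strip_lemma (m j : ℕ) (hm : 1 ≤ m) (hj : j ≤ m)
    (lam nu : ℕ → ℤ) (f : ℕ → ℕ → ℕ → ℤ) (hf : RhombusIneqs m f)
    (homega : ∀ t, t < m → f (m - (t+1)) (t+1) 0 - f (m - t) t 0
        = if t < j then 1 else 0)
    (hlam : ∀ t, t < m → f 0 (m - (t+1)) (t+1) - f 0 (m - t) t = lam t)
    (hnu : ∀ t, t < m → f (m - (t+1)) 0 (t+1) - f (m - t) 0 t = nu t)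
    (hlamdec : ∀ t, t + 1 < m → lam (t+1) ≤ lam t)
    (hnudec : ∀ t, t + 1 < m → nu (t+1) ≤ nu t) :
    (nu 0 = lam 0 ∨ nu 0 = lam 0 + 1) ∧
    (nu 0 = lam 0 →
      ∀ t, t + 1 < m →
        f (m - 1 - (t+1)) (t+1) 1 - f (m - 1 - t) t 1 = if t < j then 1 else 0) ∧
    (nu 0 = lam 0 + 1 →
      ∀ t, t + 1 < m →
        f (m - 1 - (t+1)) (t+1) 1 - f (m - 1 - t) t 1 = if t + 1 < j then 1 else 0) :=
  ktw_strip_lemma_general m j hm lam nu f hf homega hlam hnu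
end
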